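/- arXiv:1109.4626 — 7 statements merged into one kernel-verified Lean document; each statement's English description precedes it below -/
import Mathlib

section
/- Let c = (c_1,...,c_n) be a sequence of non-negative integers with sum n-1, and define partial sums S_0 = 0, S_i = sum_{j=1}^i (c_j - 1). Then there exists a unique cyclic permutation σ of [n] such that the partial sums of the permuted sequence (c_{σ(1)},...,c_{σ(n)}) satisfy S_i(σ(c)) > -1 for all 0 ≤ i < n (the sums reaching -1 at n); specifically, σ is the cyclic shift sending k to n, where k is the least index at which (S_i(c))_{i=0}^n attains its minimum. -/
/-- Partial sum `S_k = ∑_{i=1}^k (c_i - 1)` of a length-`n` sequence (0-indexed). -/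
def pS {n : ℕ} (c : Fin n → ℕ) (k : ℕ) : ℤ :=
  ∑ i : Fin n, if (i : ℕ) < k then (c i : ℤ) - 1 else 0

/-- Cyclic shift of a sequence by `j`. -/
def cshift {n : ℕ} (j : Fin n) (c : Fin n → ℕ) : Fin n → ℕ := fun i => c (i + j)

/-- A tree sequence: partial sums are nonnegative before index `n`
(equivalently, the queue `S_i + 1` stays strictly positive for `i < n`). -/
def IsTreeSeq {n : ℕ} (c : Fin n → ℕ) : Prop := ∀ k < n, 0 ≤ pS c k

lemma pS_zero {n : ℕ} (c : Fin n → ℕ) : pS c 0 = 0 := by simp [pS]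

lemma pS_succ {n : ℕ} (c : Fin n → ℕ) {k : ℕ} (hk : k < n) :
    pS c (k + 1) = pS c k + ((c ⟨k, hk⟩ : ℤ) - 1) := by
  unfold pS
  have h : ∀ i : Fin n, (if (i : ℕ) < k + 1 then (c i : ℤ) - 1 else 0) =
      (if (i : ℕ) < k then (c i : ℤ) - 1 else 0) +
      (if i = ⟨k, hk⟩ then (c i : ℤ) - 1 else 0) := by
    intro i
    by_cases h1 : i = ⟨k, hk⟩
    · subst h1; simp
    · have h2 : (i : ℕ) ≠ k := fun h => h1 (Fin.ext h)
      by_cases h3 : (i : ℕ) < k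
      · simp [h3, h1, Nat.lt_succ_of_lt h3]
      · have h4 : ¬ (i : ℕ) < k + 1 := by omega
        simp [h3, h1, h4]
  rw [Finset.sum_congr rfl (fun i _ => h i), Finset.sum_add_distrib,
    Finset.sum_ite_eq' Finset.univ (⟨k, hk⟩ : Fin n), if_pos (Finset.mem_univ _)]

lemma pS_n {n : ℕ} (c : Fin n → ℕ) (hn : 0 < n) (hc : ∑ i, c i = n - 1) :
    pS c n = -1 := by
  unfold pS
  rw [Finset.sum_congr rfl (fun i _ => if_pos i.isLt), Finset.sum_sub_distrib,
    ← Nat.cast_sum, hc]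
  simp
  omega

lemma pS_cshift {n : ℕ} (c : Fin n → ℕ) (hn : 0 < n) (hc : ∑ i, c i = n - 1)
    {j : ℕ} (hj : j < n) :
    ∀ m ≤ n, pS (cshift ⟨j, hj⟩ c) m =
      if j + m ≤ n then pS c (j + m) - pS c j else pS c (j + m - n) - 1 - pS c j := by
  intro m
  induction m with
  | zero =>
    intro _
    rw [if_pos (by omega)]
    simp [pS_zero]
  | succ m ih =>
    intro hm1
    have hm : m < n := by omega
    have step : pS (cshift ⟨j, hj⟩ c) (m + 1) =
        pS (cshift ⟨j, hj⟩ c) m + ((c (⟨m, hm⟩ + ⟨j, hj⟩) : ℤ) - 1) :=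
      pS_succ _ hm
    rw [step, ih (by omega)]
    by_cases h1 : j + (m + 1) ≤ n
    · rw [if_pos (by omega : j + m ≤ n), if_pos h1]
      have hjm : j + m < n := by omega
      have he : (⟨m, hm⟩ + ⟨j, hj⟩ : Fin n) = ⟨j + m, hjm⟩ := by
        apply Fin.ext
        rw [Fin.val_add]
        show (m + j) % n = j + m
        rw [Nat.mod_eq_of_lt (by omega)]
        omega
      have e2 : j + (m + 1) = (j + m) + 1 := by omega
      rw [he, e2, pS_succ c hjm]
      ring
    · by_cases h2 : j + m ≤ n
      · have hen : j + m = n := by omega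
        rw [if_pos h2, if_neg h1]
        have he : (⟨m, hm⟩ + ⟨j, hj⟩ : Fin n) = ⟨0, hn⟩ := by
          apply Fin.ext
          rw [Fin.val_add]
          show (m + j) % n = 0
          have e : m + j = n := by omega
          rw [e, Nat.mod_self]
        have e1 : j + (m + 1) - n = 1 := by omega
        rw [he, hen, pS_n c hn hc, e1]
        have e3 : pS c 1 = pS c 0 + ((c ⟨0, hn⟩ : ℤ) - 1) := pS_succ c hn
        rw [e3, pS_zero]
        ring
      · rw [if_neg h2, if_neg h1]
        have ht : j + m - n < n := by omega
        have he : (⟨m, hm⟩ + ⟨j, hj⟩ : Fin n) = ⟨j + m - n, ht⟩ := by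
          apply Fin.ext
          rw [Fin.val_add]
          show (m + j) % n = j + m - n
          rw [Nat.mod_eq_sub_mod (by omega), Nat.mod_eq_of_lt (by omega)]
          omega
        have e1 : j + (m + 1) - n = (j + m - n) + 1 := by omega
        rw [he, e1, pS_succ c ht]
        ring

lemma tree_of {n : ℕ} (c : Fin n → ℕ) (hn : 0 < n) (hc : ∑ i, c i = n - 1)
    {j : ℕ} (hj : j < n)
    (h1 : ∀ i, j ≤ i → i ≤ n → (i < n ∨ 1 ≤ j) → pS c j ≤ pS c i)
    (h2 : ∀ i, 1 ≤ i → i < j → pS c j + 1 ≤ pS c i) :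
    IsTreeSeq (cshift ⟨j, hj⟩ c) := by
  intro m hm
  rw [pS_cshift c hn hc hj m (le_of_lt hm)]
  split_ifs with h
  · have := h1 (j + m) (by omega) h (by omega)
    linarith
  · have := h2 (j + m - n) (by omega) (by omega)
    linarith

lemma of_tree {n : ℕ} (c : Fin n → ℕ) (hn : 0 < n) (hc : ∑ i, c i = n - 1)
    {j : ℕ} (hj : j < n) (ht : IsTreeSeq (cshift ⟨j, hj⟩ c)) :
    (∀ i, j ≤ i → i ≤ n → i - j < n → pS c j ≤ pS c i) ∧
      (∀ i, 1 ≤ i → i < j → pS c j + 1 ≤ pS c i) := by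
  constructor
  · intro i ha hb hd
    have h := ht (i - j) (by omega)
    rw [pS_cshift c hn hc hj _ (by omega), if_pos (by omega)] at h
    have e : j + (i - j) = i := by omega
    rw [e] at h
    linarith
  · intro i ha hb
    have h := ht (i + n - j) (by omega)
    rw [pS_cshift c hn hc hj _ (by omega), if_neg (by omega)] at h
    have e : j + (i + n - j) - n = i := by omega
    rw [e] at h
    linarith

/-- Cycle lemma: there is a unique cyclic shift making a child sequence a tree
sequence, namely the shift starting after the least index at which the partial
sums attain their minimum. -/
theorem stmt0 {n : ℕ} (hn : 0 < n) (c : Fin n → ℕ) (hc : ∑ i, c i = n - 1)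
    (k : ℕ) (hk : k = sInf {i | i ≤ n ∧ ∀ i' ≤ n, pS c i ≤ pS c i'}) :
    IsTreeSeq (cshift ⟨k % n, Nat.mod_lt _ hn⟩ c) ∧
      ∀ j : Fin n, IsTreeSeq (cshift j c) → j = ⟨k % n, Nat.mod_lt _ hn⟩ := by
  have hne : {i | i ≤ n ∧ ∀ i' ≤ n, pS c i ≤ pS c i'}.Nonempty := by
    obtain ⟨a, ha, hmin⟩ := Finset.exists_min_image (Finset.range (n + 1)) (pS c)
      ⟨0, by simp⟩
    have han : a ≤ n := by have := Finset.mem_range.mp ha; omega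
    exact ⟨a, han, fun i hi => hmin i (Finset.mem_range.mpr (by omega))⟩
  have hkS : k ∈ {i | i ≤ n ∧ ∀ i' ≤ n, pS c i ≤ pS c i'} := hk ▸ Nat.sInf_mem hne
  obtain ⟨hkle, hkmin⟩ := hkS
  have hpn : pS c n = -1 := pS_n c hn hc
  have hkleast : ∀ i < k, pS c k < pS c i := by
    intro i hi
    have hin : i ≤ n := le_trans (le_of_lt hi) hkle
    have hnm : i ∉ {i | i ≤ n ∧ ∀ i' ≤ n, pS c i ≤ pS c i'} :=
      Nat.notMem_of_lt_sInf (hk ▸ hi)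
    simp only [Set.mem_setOf_eq, not_and, not_forall, not_le] at hnm
    obtain ⟨i', hi'n, hi'⟩ := hnm hin
    exact lt_of_le_of_lt (hkmin i' hi'n) hi'
  rcases Nat.lt_or_ge k n with hclt | hcge
  · -- k < n
    have hkm : k % n = k := Nat.mod_eq_of_lt hclt
    constructor
    · refine tree_of c hn hc (Nat.mod_lt _ hn) ?_ ?_
      · simp only [hkm]
        exact fun i _ h2 _ => hkmin i h2
      · simp only [hkm]
        intro i _ hi
        have := hkleast i hi
        omega
    · intro j htj
      have htj' : IsTreeSeq (cshift ⟨(j : ℕ), j.isLt⟩ c) := htj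
      obtain ⟨h1, h2⟩ := of_tree c hn hc j.isLt htj'
      apply Fin.ext
      show (j : ℕ) = k % n
      rw [hkm]
      by_cases hj0 : (j : ℕ) = 0
      · exfalso
        have h0' := h1 k (by omega) hkle (by omega)
        rw [hj0, pS_zero] at h0'
        have hkn : pS c k ≤ pS c n := hkmin n le_rfl
        omega
      · have hj1 : 1 ≤ (j : ℕ) := by omega
        have hjn : pS c (j : ℕ) ≤ -1 := by
          have := h1 n (by omega) le_rfl (by omega)
          omega
        -- j is a minimizer
        have hjmin : ∀ i ≤ n, pS c (j : ℕ) ≤ pS c i := by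
          intro i hi
          rcases Nat.lt_or_ge i (j : ℕ) with hij | hij
          · rcases Nat.eq_zero_or_pos i with h0 | h0
            · rw [h0, pS_zero]; omega
            · have := h2 i h0 hij; omega
          · exact h1 i hij hi (by omega)
        have hkj : k ≤ (j : ℕ) := hk ▸ Nat.sInf_le ⟨by omega, hjmin⟩
        rcases Nat.lt_or_ge k (j : ℕ) with hlt | hge
        · exfalso
          have ha : pS c k ≤ pS c (j : ℕ) := hkmin _ (by omega)
          have hb : pS c (j : ℕ) < pS c k := by
            rcases Nat.eq_zero_or_pos k with h0 | h0
            · rw [h0, pS_zero]; omega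
            · have := h2 k h0 hlt; omega
          omega
        · omega
  · -- k = n
    have hke : k = n := le_antisymm hkle hcge
    have h0 : k % n = 0 := by rw [hke]; exact Nat.mod_self n
    have hposs : ∀ i < n, 0 ≤ pS c i := by
      intro i hi
      have := hkleast i (by omega)
      rw [hke, hpn] at this
      omega
    constructor
    · refine tree_of c hn hc (Nat.mod_lt _ hn) ?_ ?_
      · simp only [h0]
        intro i _ hin hd
        rcases hd with hd | hd
        · rw [pS_zero]; exact hposs i hd
        · omega
      · simp only [h0]
        intro i hi hi'
        omega
    · intro j htj
      have htj' : IsTreeSeq (cshift ⟨(j : ℕ), j.isLt⟩ c) := htj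
      obtain ⟨h1, h2⟩ := of_tree c hn hc j.isLt htj'
      apply Fin.ext
      show (j : ℕ) = k % n
      rw [h0]
      by_contra hj0
      have hj1 : 1 ≤ (j : ℕ) := by omega
      have hjn : pS c (j : ℕ) ≤ -1 := by
        have := h1 n (by omega) le_rfl (by omega)
        omega
      have := hposs (j : ℕ) j.isLt
      omega
end

section
/- Let c = (c_1,...,c_n) be a child sequence (non-negative integers summing to n-1) with partial sums S_i(c) = sum_{j=1}^i (c_j - 1), and let σ be the unique cyclic permutation of [n] making σ(c) a tree sequence. If max_{0 ≤ i ≤ n} S_i(σ(c)) = m, then max_{0 ≤ i ≤ n} |S_i(c)| ≥ m/2. -/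
lemma sub_val' {n : ℕ} (i j : Fin n) :
    ((i - j : Fin n) : ℕ) = if j.val ≤ i.val then i.val - j.val else i.val + n - j.val := by
  have hi := i.isLt
  have hj := j.isLt
  rw [Fin.sub_def]
  simp only
  split
  · rename_i h
    have h2 : n - j.val + i.val = (i.val - j.val) + n := by omega
    rw [h2, Nat.add_mod_right, Nat.mod_eq_of_lt (by omega)]
  · rw [Nat.mod_eq_of_lt (by omega)]
    omega

lemma key {n : ℕ} (hn : 0 < n) (c : Fin n → ℕ) (hc : ∑ i, c i = n - 1)
    (j : Fin n) (k : ℕ) (hk : k ≤ n) :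
    ∃ a ≤ n, pS (cshift j c) k ≤ pS c a - pS c j.val := by
  haveI : NeZero n := ⟨hn.ne'⟩
  have hSn : pS c n = -1 := by
    unfold pS
    rw [Finset.sum_congr rfl (fun i _ => if_pos i.isLt), Finset.sum_sub_distrib]
    simp only [Finset.sum_const, Finset.card_univ, Fintype.card_fin, nsmul_eq_mul, mul_one]
    rw [← Nat.cast_sum, hc]
    omega
  have hre : pS (cshift j c) k
      = ∑ i : Fin n, (if ((i - j : Fin n) : ℕ) < k then (c i : ℤ) - 1 else 0) := by
    unfold pS cshift
    rw [← Equiv.sum_comp (Equiv.addRight j)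
      (fun i : Fin n => if ((i - j : Fin n) : ℕ) < k then (c i : ℤ) - 1 else 0)]
    refine Finset.sum_congr rfl fun i _ => ?_
    simp [Equiv.addRight, add_sub_cancel_right]
  have hj := j.isLt
  rcases le_or_gt (j.val + k) n with h | h
  · refine ⟨j.val + k, h, le_of_eq ?_⟩
    rw [hre]
    unfold pS
    rw [← Finset.sum_sub_distrib]
    refine Finset.sum_congr rfl fun i _ => ?_
    have hi := i.isLt
    rw [sub_val' i j]
    split_ifs <;> omega
  · refine ⟨j.val + k - n, by omega, ?_⟩
    have heq : pS (cshift j c) k = pS c (j.val + k - n) + pS c n - pS c j.val := by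
      rw [hre]
      unfold pS
      rw [← Finset.sum_add_distrib, ← Finset.sum_sub_distrib]
      refine Finset.sum_congr rfl fun i _ => ?_
      have hi := i.isLt
      rw [sub_val' i j]
      split_ifs <;> omega
    rw [heq, hSn]
    linarith


/-- If the maximum of the partial sums of the tree-sequence cyclic shift of a
child sequence `c` is `m`, then `max_{0 ≤ i ≤ n} |S_i(c)| ≥ m/2`. -/
theorem stmt1 {n : ℕ} (hn : 0 < n) (c : Fin n → ℕ) (hc : ∑ i, c i = n - 1)
    (j : Fin n) (hj : IsTreeSeq (cshift j c)) (m : ℤ)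
    (hm : IsGreatest {s : ℤ | ∃ i ≤ n, pS (cshift j c) i = s} m) :
    ∃ i ≤ n, (m : ℝ) / 2 ≤ |(pS c i : ℝ)| := by
  obtain ⟨⟨i, hi, hTi⟩, hub⟩ := hm
  obtain ⟨a, ha, hle⟩ := key hn c hc j i hi
  rw [hTi] at hle
  have h1 : pS c a ≤ |pS c a| := le_abs_self _
  have h2 : -|pS c j.val| ≤ pS c j.val := neg_abs_le _
  rcases le_total |pS c j.val| |pS c a| with h | h
  · refine ⟨a, ha, ?_⟩
    have hm2 : m ≤ 2 * |pS c a| := by linarith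
    have : (m : ℝ) ≤ 2 * |(pS c a : ℝ)| := by
      rw [← Int.cast_abs]; exact_mod_cast hm2
    linarith
  · refine ⟨j.val, le_of_lt j.isLt, ?_⟩
    have hm2 : m ≤ 2 * |pS c j.val| := by linarith
    have : (m : ℝ) ≤ 2 * |(pS c j.val : ℝ)| := by
      rw [← Int.cast_abs]; exact_mod_cast hm2
    linarith
end

section
/- Let c be a child sequence of length n with cyclic permutation σ making σ(c) a tree sequence, and let σ* be the cyclic permutation of [n] sending 1 to 1 + ⌊n/2⌋. If max_{0 ≤ i ≤ n} S_i(σ(c)) = m, then either max_{0 ≤ i ≤ ⌊n/2⌋} |S_i(c)| ≥ m/4 or max_{0 ≤ i ≤ ⌈n/2⌉} |S_i(σ*(c))| ≥ m/4. -/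
/-!
Suppose both conclusions fail. Every partial sum of `c` then has absolute value below `m/2`:
up to `⌊n/2⌋` directly, and beyond it because `S_p(c) = S_{⌊n/2⌋}(c) + S_{p-⌊n/2⌋}(σ*(c))`.
On the other hand every partial sum of a cyclic shift of `c` by `j` is a difference
`S_a(c) - S_j(c)`, up to the total sum `S_n(c) = -1 ≤ 0` when the window wraps around.
Applied to the partial sum of `σ(c)` that attains `m`, this gives `m < m/2 + m/2`.
-/

open Finset

lemma pS_self_eq_neg_one {n : ℕ} (hn : 0 < n) {c : Fin n → ℕ} (hc : ∑ i, c i = n - 1) :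
    pS c n = -1 := by
  simp only [pS, Fin.is_lt, if_true, sum_sub_distrib, ← Nat.cast_sum, hc, sum_const, card_univ,
    Fintype.card_fin, nsmul_eq_mul, mul_one]
  omega

lemma pS_cshift_of_add_le {n : ℕ} (c : Fin n → ℕ) (j : Fin n) {k : ℕ} (hk : (j : ℕ) + k ≤ n) :
    pS (cshift j c) k = pS c (j + k) - pS c j := by
  have : NeZero n := ⟨j.pos.ne'⟩
  rw [pS, pS, pS, ← sum_sub_distrib]
  refine Fintype.sum_equiv (Equiv.addRight j) _ _ fun i => ?_
  simp only [cshift, Equiv.coe_addRight, Fin.val_add_eq_ite]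
  have := i.is_lt
  split_ifs <;> omega

lemma pS_cshift_of_lt_add {n : ℕ} (c : Fin n → ℕ) (j : Fin n) {k : ℕ} (hk : k ≤ n)
    (hw : n < (j : ℕ) + k) :
    pS (cshift j c) k = pS c (j + k - n) - pS c j + pS c n := by
  have : NeZero n := ⟨j.pos.ne'⟩
  rw [pS, pS, pS, pS, ← sum_sub_distrib, ← sum_add_distrib]
  refine Fintype.sum_equiv (Equiv.addRight j) _ _ fun i => ?_
  simp only [cshift, Equiv.coe_addRight, Fin.val_add_eq_ite]
  have := i.is_lt
  have := j.is_lt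
  split_ifs <;> omega

lemma pS_eq_add_pS_cshift {n : ℕ} (c : Fin n → ℕ) (j : Fin n) {p : ℕ} (hjp : (j : ℕ) ≤ p)
    (hp : p ≤ n) : pS c p = pS c j + pS (cshift j c) (p - j) := by
  rw [pS_cshift_of_add_le c j (by omega), Nat.add_sub_cancel' hjp]
  ring

lemma exists_pS_cshift_le_sub {n : ℕ} {c : Fin n → ℕ} (hcn : pS c n ≤ 0) (j : Fin n) {k : ℕ}
    (hk : k ≤ n) : ∃ a ≤ n, pS (cshift j c) k ≤ pS c a - pS c j := by
  rcases le_or_gt ((j : ℕ) + k) n with hjk | hjk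
  · exact ⟨j + k, hjk, (pS_cshift_of_add_le c j hjk).le⟩
  · refine ⟨j + k - n, by omega, ?_⟩
    rw [pS_cshift_of_lt_add c j hk hjk]
    linarith

theorem stmt2_general {n : ℕ} (hn : 0 < n) (c : Fin n → ℕ) (hc : ∑ i, c i = n - 1)
    (j : Fin n) (m : ℤ)
    (hm : IsGreatest {s : ℤ | ∃ i ≤ n, pS (cshift j c) i = s} m) :
    (∃ i ≤ n / 2, (m : ℝ) / 4 ≤ |(pS c i : ℝ)|) ∨
      (∃ i ≤ (n + 1) / 2,
        (m : ℝ) / 4 ≤ |(pS (cshift ⟨n / 2, Nat.div_lt_self hn one_lt_two⟩ c) i : ℝ)|) := by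
  set h : Fin n := ⟨n / 2, Nat.div_lt_self hn one_lt_two⟩
  by_contra! hsmall
  obtain ⟨hfirst, hsecond⟩ := hsmall
  have hall : ∀ p ≤ n, |(pS c p : ℝ)| < m / 2 := by
    intro p hp
    rcases le_or_gt p (n / 2) with hp2 | hp2
    · linarith [hfirst p hp2, abs_nonneg (pS c p : ℝ)]
    · rw [pS_eq_add_pS_cshift c h hp2.le hp, Int.cast_add]
      linarith [abs_add_le (pS c (n / 2) : ℝ) (pS (cshift h c) (p - n / 2)),
        hfirst (n / 2) le_rfl, hsecond (p - n / 2) (by omega)]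
  obtain ⟨k, hk, hkm⟩ := hm.1
  obtain ⟨a, ha, hle⟩ :=
    exists_pS_cshift_le_sub (by rw [pS_self_eq_neg_one hn hc]; omega) j hk
  have hleR : (m : ℝ) ≤ pS c a - pS c j := by rw [← hkm]; exact_mod_cast hle
  linarith [le_abs_self (pS c a : ℝ), neg_abs_le (pS c j : ℝ), hall a ha, hall j j.is_lt.le]

/-- If the maximum of the partial sums of the tree-sequence cyclic shift of a
child sequence `c` is `m`, then either the partial sums of `c` up to `⌊n/2⌋`
reach absolute value `m/4`, or the partial sums up to `⌈n/2⌉` of the cyclic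
shift of `c` by `⌊n/2⌋` (sending `1` to `1 + ⌊n/2⌋`) do. -/
theorem stmt2 {n : ℕ} (hn : 0 < n) (c : Fin n → ℕ) (hc : ∑ i, c i = n - 1)
    (j : Fin n) (hj : IsTreeSeq (cshift j c)) (m : ℤ)
    (hm : IsGreatest {s : ℤ | ∃ i ≤ n, pS (cshift j c) i = s} m) :
    (∃ i ≤ n / 2, (m : ℝ) / 4 ≤ |(pS c i : ℝ)|) ∨
      (∃ i ≤ (n + 1) / 2,
        (m : ℝ) / 4 ≤ |(pS (cshift ⟨n / 2, Nat.div_lt_self hn one_lt_two⟩ c) i : ℝ)|) :=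
  stmt2_general hn c hc j m hm
end

section
/- The number of plane (rooted ordered) trees with n nodes having child sequence c (i.e., some ordering v_1,...,v_n of the nodes has v_i with exactly c_i children) equals (1/n) · n! / ∏_{k≥0} n_k!, where n_k = #{i : c_i = k}. -/
/-- A plane (rooted ordered) tree: a root together with an ordered list of subtrees. -/
inductive PlaneTree where
  | node : List PlaneTree → PlaneTree

namespace PlaneTree

/-- Number of nodes. -/
def size : PlaneTree → ℕ
  | node l => 1 + (l.attach.map fun t => size t.1).sum
decreasing_by simp only [PlaneTree.node.sizeOf_spec]; have := List.sizeOf_lt_of_mem t.2; omega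

/-- The multiset of the numbers of children of the nodes of a plane tree. -/
def childCounts : PlaneTree → Multiset ℕ
  | node l => l.length ::ₘ (l.attach.map fun t => childCounts t.1).sum
decreasing_by simp only [PlaneTree.node.sizeOf_spec]; have := List.sizeOf_lt_of_mem t.2; omega

/-- Number of nodes at depth `k`. -/
def nodesAt : ℕ → PlaneTree → ℕ
  | 0, _ => 1
  | k + 1, node l => (l.map (nodesAt k)).sum

/-- Width: maximum number of nodes at any single depth. -/
noncomputable def width (T : PlaneTree) : ℕ := sSup (Set.range fun k => nodesAt k T)

/-- Height: greatest depth of any node. -/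
noncomputable def height (T : PlaneTree) : ℕ := sSup {k | nodesAt k T ≠ 0}

/-- `T` has child sequence `c` iff the multiset of child-counts of its nodes is
the multiset of entries of `c`. -/
def hasChildSeq {n : ℕ} (c : Fin n → ℕ) (T : PlaneTree) : Prop :=
  childCounts T = Multiset.map c Finset.univ.val

end PlaneTree

/-!
Reading the child counts of a plane tree in preorder gives a bijection between plane trees and
Łukasiewicz words: sequences of naturals with sum one less than their length all of whose proper
prefixes have sum at least their length. By the cycle lemma, exactly one of the `n` rotations of a
word of length `n` and sum `n - 1` is a Łukasiewicz word, so the `n! / ∏ₖ nₖ!` rearrangements of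
`c` fall into classes of size `n` containing one tree each.
-/

/-- `IsLukasiewicz k w`: `w` lists the child counts, in preorder, of a forest of `k` plane trees
(read `w` left to right keeping a stack of pending subtrees). -/
def IsLukasiewicz : ℕ → List ℕ → Prop
  | k, [] => k = 0
  | k, a :: w => 0 < k ∧ IsLukasiewicz (k - 1 + a) w

namespace PlaneTree

def code : PlaneTree → List ℕ
  | node l => l.length :: (l.attach.map fun t => code t.1).flatten
decreasing_by simp only [PlaneTree.node.sizeOf_spec]; have := List.sizeOf_lt_of_mem t.2; omega

theorem code_node (l : List PlaneTree) : code (node l) = l.length :: l.flatMap code := by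
  rw [code]; simp [List.flatMap]

theorem childCounts_node (l : List PlaneTree) :
    childCounts (node l) = l.length ::ₘ (l.map childCounts).sum := by
  rw [childCounts]; simp

theorem flatMap_code_cons (l r : List PlaneTree) :
    (node l :: r).flatMap code = l.length :: (l ++ r).flatMap code := by
  simp [code_node, List.flatMap_append]

@[elab_as_elim]
theorem forest_induction {P : List PlaneTree → Prop} (nil : P [])
    (cons : ∀ l r, P (l ++ r) → P (node l :: r)) (ts : List PlaneTree) : P ts := by
  induction h : (ts.flatMap code).length using Nat.strong_induction_on generalizing ts with
  | _ N ih =>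
    match ts with
    | [] => exact nil
    | node l :: r =>
      rw [flatMap_code_cons, List.length_cons] at h
      exact cons l r (ih _ (by omega) _ rfl)

theorem isLukasiewicz_flatMap_code (ts : List PlaneTree) :
    IsLukasiewicz ts.length (ts.flatMap code) := by
  induction ts using forest_induction with
  | nil => rfl
  | cons l r ih =>
    rw [flatMap_code_cons]
    refine ⟨by simp, ?_⟩
    simpa [Nat.add_comm] using ih

theorem coe_flatMap_code (ts : List PlaneTree) :
    (ts.flatMap code : Multiset ℕ) = (ts.map childCounts).sum := by
  induction ts using forest_induction with
  | nil => rfl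
  | cons l r ih =>
    rw [flatMap_code_cons, ← Multiset.cons_coe, ih]
    simp [childCounts_node]

theorem flatMap_code_injective : Function.Injective (List.flatMap code) := by
  intro ts
  induction ts using forest_induction with
  | nil =>
    rintro (_ | ⟨⟨l⟩, r⟩) h
    · rfl
    · rw [List.flatMap_nil, flatMap_code_cons] at h; cases h
  | cons l r ih =>
    rintro (_ | ⟨⟨l'⟩, r'⟩) h
    · rw [List.flatMap_nil, flatMap_code_cons] at h; cases h
    · rw [flatMap_code_cons, flatMap_code_cons, List.cons.injEq] at h
      obtain ⟨hl, hr⟩ := List.append_inj (ih h.2) h.1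
      rw [hl, hr]

theorem exists_flatMap_code_eq {k : ℕ} {w : List ℕ} (h : IsLukasiewicz k w) :
    ∃ ts : List PlaneTree, ts.length = k ∧ ts.flatMap code = w := by
  induction w generalizing k with
  | nil => exact ⟨[], h.symm, rfl⟩
  | cons a w ih =>
    obtain ⟨hk, hw⟩ := h
    obtain ⟨ts, hlen, rfl⟩ := ih hw
    refine ⟨node (ts.take a) :: ts.drop a, by simp; omega, ?_⟩
    rw [flatMap_code_cons, List.take_append_drop, List.length_take, min_eq_left (by omega)]

theorem image_code_setOf_childCounts_eq (M : Multiset ℕ) :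
    code '' {T | T.childCounts = M} = {w : List ℕ | ↑w = M ∧ IsLukasiewicz 1 w} := by
  ext w
  constructor
  · rintro ⟨T, rfl, rfl⟩
    simpa using And.intro (coe_flatMap_code [T]) (isLukasiewicz_flatMap_code [T])
  · rintro ⟨rfl, hw⟩
    obtain ⟨ts, hlen, rfl⟩ := exists_flatMap_code_eq hw
    obtain ⟨T, rfl⟩ := List.length_eq_one_iff.mp hlen
    exact ⟨T, by simpa using (coe_flatMap_code [T]).symm, by simp⟩

theorem code_injective : Function.Injective code := fun T T' h =>
  List.singleton_injective (flatMap_code_injective (by simpa using h))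

end PlaneTree

theorem isLukasiewicz_iff {k : ℕ} {w : List ℕ} :
    IsLukasiewicz k w ↔ w.sum + k = w.length ∧ ∀ i < w.length, i < (w.take i).sum + k := by
  induction w generalizing k with
  | nil => simp [IsLukasiewicz]
  | cons a w ih =>
    simp only [IsLukasiewicz, ih, List.length_cons, List.sum_cons, Nat.forall_lt_succ_left,
      List.take_zero, List.take_succ_cons, List.sum_nil]
    constructor
    · rintro ⟨hk, hsum, hlt⟩
      exact ⟨by omega, by omega, fun i hi => by have := hlt i hi; omega⟩
    · rintro ⟨hsum, hk, hlt⟩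
      exact ⟨by omega, by omega, fun i hi => by have := hlt i hi; omega⟩

theorem isLukasiewicz_one_iff {w : List ℕ} :
    IsLukasiewicz 1 w ↔ w.sum + 1 = w.length ∧ ∀ i < w.length, i ≤ (w.take i).sum := by
  simp only [isLukasiewicz_iff, Nat.lt_succ_iff]

namespace List

theorem sum_take_add_sum_take_rotate {w : List ℕ} {m i : ℕ} (hm : m ≤ w.length)
    (hi : i ≤ w.length - m) :
    (w.take m).sum + ((w.rotate m).take i).sum = (w.take (m + i)).sum := by
  rw [rotate_eq_drop_append_take hm, take_append_of_le_length (by rw [length_drop]; omega),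
    take_add, sum_append]

theorem sum_take_add_sum_take_rotate_of_le {w : List ℕ} {m i : ℕ} (hm : m ≤ w.length)
    (hi : w.length - m ≤ i) (hi' : i ≤ w.length) :
    (w.take m).sum + ((w.rotate m).take i).sum = w.sum + (w.take (i - (w.length - m))).sum := by
  rw [rotate_eq_drop_append_take hm, take_append, sum_append, length_drop,
    take_of_length_le (l := w.drop m) (by rw [length_drop]; omega), take_take,
    min_eq_left (by omega),
    ← add_assoc, ← sum_append, take_append_drop]

end List

theorem eq_zero_of_isLukasiewicz_rotate {w : List ℕ} {d : ℕ} (hw : IsLukasiewicz 1 w)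
    (hd : d < w.length) (hrot : IsLukasiewicz 1 (w.rotate d)) : d = 0 := by
  by_contra hd0
  rw [isLukasiewicz_one_iff] at hw hrot
  have hsplit := List.sum_take_add_sum_take_rotate (le_of_lt hd) (le_refl (w.length - d))
  rw [Nat.add_sub_cancel' (le_of_lt hd), List.take_length] at hsplit
  have h1 := hw.2 d hd
  have h2 := hrot.2 (w.length - d) (by rw [List.length_rotate]; omega)
  omega

/-- The cycle lemma: rotate to the first position where prefix sum minus prefix length is
minimal. -/
theorem exists_isLukasiewicz_rotate {w : List ℕ} (hw : w.sum + 1 = w.length) :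
    ∃ m < w.length, IsLukasiewicz 1 (w.rotate m) := by
  classical
  have hle_sum : ∀ j, (w.take j).sum ≤ w.sum := fun j =>
    (List.take_sublist j w).sum_le_sum fun _ _ => Nat.zero_le _
  have hex : ∃ m, m < w.length ∧ ∀ j < w.length, (w.take m).sum + j ≤ (w.take j).sum + m := by
    obtain ⟨m, hm, hmin⟩ := (Finset.range w.length).exists_min_image
      (fun j => (w.take j).sum + w.length - j) ⟨0, by simp; omega⟩
    refine ⟨m, by simpa using hm, fun j hj => ?_⟩
    have := hmin j (by simpa using hj)
    simp only [Finset.mem_range] at hm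
    omega
  obtain ⟨m, ⟨hmn, hmin⟩, hnot_min⟩ : ∃ m, (m < w.length ∧
      ∀ j < w.length, (w.take m).sum + j ≤ (w.take j).sum + m) ∧ ∀ j < m, ¬(j < w.length ∧
      ∀ j' < w.length, (w.take j).sum + j' ≤ (w.take j').sum + j) :=
    ⟨Nat.find hex, Nat.find_spec hex, fun _ => Nat.find_min hex⟩
  have hfirst : ∀ j < m, (w.take m).sum + j < (w.take j).sum + m := fun j hj => by
    have := hnot_min j hj
    simp only [not_and, not_forall, not_le] at this
    obtain ⟨j', hj', hlt⟩ := this (by omega)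
    have := hmin j' hj'
    omega
  refine ⟨m, hmn, isLukasiewicz_one_iff.mpr ⟨?_, fun i hi => ?_⟩⟩
  · rw [(List.rotate_perm w m).sum_eq, List.length_rotate, hw]
  rw [List.length_rotate] at hi
  have := hle_sum m
  rcases Nat.lt_or_ge (m + i) w.length with hlow | hhigh
  · have hsplit := List.sum_take_add_sum_take_rotate (le_of_lt hmn)
      (show i ≤ w.length - m by omega)
    have := hmin (m + i) hlow
    omega
  · have hsplit := List.sum_take_add_sum_take_rotate_of_le (le_of_lt hmn)
      (show w.length - m ≤ i by omega) (le_of_lt hi)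
    have := hfirst (i - (w.length - m)) (by omega)
    omega

theorem ncard_eq_card_mul_ncard_isLukasiewicz {M : Multiset ℕ}
    (hM : M.sum + 1 = Multiset.card M) :
    {w : List ℕ | ↑w = M}.ncard =
      Multiset.card M * {w : List ℕ | ↑w = M ∧ IsLukasiewicz 1 w}.ncard := by
  set n := Multiset.card M
  have hlen : ∀ {w : List ℕ}, ↑w = M → w.length = n := fun h => by rw [← Multiset.coe_card, h]
  rw [← Finset.card_range n, ← Set.ncard_coe_finset, Finset.coe_range, ← Set.ncard_prod]
  symm
  refine Set.ncard_congr (fun p _ => p.2.rotate p.1) ?_ ?_ ?_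
  · rintro ⟨j, w⟩ ⟨-, hwM, -⟩
    show ↑(w.rotate j) = M
    rw [← hwM, Multiset.coe_eq_coe]
    exact List.rotate_perm w j
  · rintro ⟨j, w⟩ ⟨j', w'⟩ ⟨(hj : j < n), hwM, hw⟩ ⟨(hj' : j' < n), hw'M, hw'⟩
      (h : w.rotate j = w'.rotate j')
    wlog hle : j' ≤ j generalizing j j' w w'
    · exact (this j' w' j w hj' hw'M hw' hj hwM hw h.symm (by omega)).symm
    have hrot : w' = w.rotate (j - j') := by
      rw [← List.rotate_eq_rotate (n := j'), List.rotate_rotate, Nat.sub_add_cancel hle, h]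
    have hjj : j - j' = 0 :=
      eq_zero_of_isLukasiewicz_rotate hw (by rw [hlen hwM]; omega) (hrot ▸ hw')
    obtain rfl : j = j' := by omega
    rw [List.rotate_eq_rotate.mp h]
  · intro w (hwM : ↑w = M)
    have hsum : w.sum + 1 = w.length := by rw [hlen hwM, ← hM, ← hwM, Multiset.sum_coe]
    obtain ⟨m, hm, hrot⟩ := exists_isLukasiewicz_rotate hsum
    refine ⟨((n - m) % n, w.rotate m), ⟨Nat.mod_lt _ (by omega), ?_, hrot⟩, ?_⟩
    · rw [← hwM, Multiset.coe_eq_coe]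
      exact List.rotate_perm w m
    · show (w.rotate m).rotate ((n - m) % n) = w
      rw [← hlen hwM, ← List.length_rotate w m, List.rotate_mod, List.length_rotate,
        List.rotate_rotate, Nat.add_sub_cancel' (le_of_lt hm), List.rotate_length]

theorem exists_perm_comp_eq {ι α : Type*} [Fintype ι] [DecidableEq α] {f g : ι → α}
    (h : Multiset.map f Finset.univ.val = Multiset.map g Finset.univ.val) :
    ∃ σ : Equiv.Perm ι, g ∘ σ = f := by
  classical
  have hcard : ∀ a, Fintype.card {i // f i = a} = Fintype.card {i // g i = a} := fun a => by
    have := congrArg (Multiset.count a) h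
    simp only [Multiset.count_map] at this
    simpa [Fintype.card_subtype, Finset.card, Finset.filter_val, eq_comm] using this
  exact ⟨Equiv.ofFiberEquiv fun a => Fintype.equivOfCardEq (hcard a),
    funext (Equiv.ofFiberEquiv_map _)⟩

open Finset in
theorem ncard_coe_eq_map_mul_prod_factorial {α : Type*} [DecidableEq α] {n : ℕ} (c : Fin n → α) :
    {w : List α | ↑w = Multiset.map c univ.val}.ncard *
      ∏ a ∈ univ.image c, (#{i | c i = a}).factorial = n.factorial := by
  have hsmul : ∀ g : (Equiv.Perm (Fin n))ᵈᵐᵃ,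
      g • c = c ∘ (DomMulAct.mk.symm g : Equiv.Perm (Fin n)) := fun g =>
    funext fun i => DomMulAct.smul_apply g c i
  have horbit : {w : List α | ↑w = Multiset.map c univ.val} =
      List.ofFn '' MulAction.orbit (Equiv.Perm (Fin n))ᵈᵐᵃ c := by
    ext w
    constructor
    · intro (hw : ↑w = Multiset.map c univ.val)
      obtain rfl : w.length = n := by simpa using congrArg Multiset.card hw
      obtain ⟨σ, hσ⟩ := exists_perm_comp_eq (f := w.get) (g := c)
        (by rw [Fin.univ_val_map, List.ofFn_get, hw])
      refine ⟨c ∘ σ, ⟨DomMulAct.mk σ, ?_⟩, by rw [hσ, List.ofFn_get]⟩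
      show DomMulAct.mk σ • c = c ∘ σ
      rw [hsmul, Equiv.symm_apply_apply]
    · rintro ⟨_, ⟨g, rfl⟩, rfl⟩
      show ↑(List.ofFn (g • c)) = Multiset.map c univ.val
      rw [hsmul, Fin.univ_val_map, Multiset.coe_eq_coe]
      exact Equiv.Perm.ofFn_comp_perm _ c
  have hstab : Nat.card (MulAction.stabilizer (Equiv.Perm (Fin n))ᵈᵐᵃ c) =
      ∏ a ∈ univ.image c, (#{i | c i = a}).factorial := by
    rw [Nat.card_congr (Equiv.subtypeEquiv (q := fun σ : Equiv.Perm (Fin n) => c ∘ σ = c)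
      DomMulAct.mk.symm fun _ => DomMulAct.mem_stabilizer_iff), Nat.card_eq_fintype_card,
      DomMulAct.stabilizer_card']
    simp only [Fintype.card_subtype]
  rw [horbit, Set.ncard_image_of_injective _ List.ofFn_injective, ← MulAction.index_stabilizer,
    ← hstab, Subgroup.index_mul_card, Nat.card_congr DomMulAct.mk.symm, Nat.card_perm,
    Nat.card_eq_fintype_card, Fintype.card_fin]

open Finset in
theorem prod_factorial_card_filter_eq_of_forall_mem {ι α : Type*} [Fintype ι] [DecidableEq α]
    {c : ι → α} {s : Finset α} (hs : ∀ i, c i ∈ s) :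
    ∏ a ∈ s, (#{i | c i = a}).factorial = ∏ a ∈ univ.image c, (#{i | c i = a}).factorial := by
  refine (prod_subset (fun a ha => ?_) fun a _ ha => ?_).symm
  · obtain ⟨i, -, rfl⟩ := mem_image.mp ha
    exact hs i
  · have hfiber : ({i | c i = a} : Finset ι) = ∅ :=
      filter_eq_empty_iff.mpr fun i _ hi => ha (hi ▸ mem_image_of_mem c (mem_univ i))
    rw [hfiber, card_empty, Nat.factorial_zero]

/-- The number of plane trees with child sequence `c` (a sequence of `n`
non-negative integers summing to `n-1`) is `(1/n)·n!/∏_k n_k!`, where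
`n_k = #{i : c_i = k}`; stated multiplicatively. -/
theorem stmt3 {n : ℕ} (hn : 0 < n) (c : Fin n → ℕ) (hc : ∑ i, c i = n - 1) :
    {T : PlaneTree | T.hasChildSeq c}.ncard * n *
        ∏ k ∈ Finset.range n, (Finset.univ.filter fun i => c i = k).card.factorial
      = Nat.factorial n := by
  set M := Multiset.map c Finset.univ.val
  have hcard : Multiset.card M = n := by simp [M]
  have hsum : M.sum + 1 = Multiset.card M := by
    rw [hcard, ← Finset.sum_eq_multiset_sum, hc]
    omega
  have htrees : {T : PlaneTree | T.hasChildSeq c}.ncard =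
      {w : List ℕ | ↑w = M ∧ IsLukasiewicz 1 w}.ncard := by
    rw [← PlaneTree.image_code_setOf_childCounts_eq,
      Set.ncard_image_of_injective _ PlaneTree.code_injective]
    rfl
  have hc_lt : ∀ i, c i ∈ Finset.range n := fun i => by
    have := Finset.single_le_sum (fun j _ => Nat.zero_le (c j)) (Finset.mem_univ i)
    rw [Finset.mem_range]
    omega
  rw [htrees, prod_factorial_card_filter_eq_of_forall_mem hc_lt, mul_comm _ n,
    ← ncard_coe_eq_map_mul_prod_factorial c, ncard_eq_card_mul_ncard_isLukasiewicz hsum, hcard]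
end

section
/- Let (X_i)_{i=0}^n be a bounded martingale adapted to a filtration (F_i), with V = sum_{i=0}^{n-1} Var(X_{i+1}|F_i), v = ess sup V, and b = max_i ess sup (X_{i+1} - X_i | F_i). Then for all t ≥ 0, P(max_{0≤i≤n} X_i ≥ t) ≤ exp(-t^2 / (2v(1 + bt/(3v)))). -/
/-!
For `h ≥ 0` and `x ≤ b` one has `exp (h x) ≤ 1 + h x + c x²` with `c = (e^{hb} - 1 - hb) / b²`,
because `(e^y - 1 - y) / y²` is nondecreasing. Conditioning on `ℱ k` gives
`E[exp (h (X (k+1) - X k)) | ℱ k] ≤ 1 + c Var(X (k+1) | ℱ k) ≤ exp (c Var(X (k+1) | ℱ k))`,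
so `exp (h X k - c ⟨X⟩ k)` has expectation at most `1`, whence `E[exp (h X n)] ≤ exp (c v)`.
Doob's maximal inequality for the submartingale `exp (h X k)` then bounds
`P(max_{k ≤ n} X k ≥ t)` by `exp (c v - h t)`, and Bernstein's estimate
`e^y - 1 - y ≤ y² / (2 (1 - y/3))` at `h = t / (v + b t / 3)` turns this exponent into the
stated one.
-/

open MeasureTheory Filter Real

namespace Real

open Nat

theorem summable_pow_add_two_div_factorial (x : ℝ) :
    Summable fun n : ℕ => x ^ (n + 2) / (n + 2)! :=
  (summable_nat_add_iff 2).2 (summable_pow_div_factorial x)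

theorem exp_sub_one_sub_eq_tsum (x : ℝ) :
    exp x - 1 - x = ∑' n : ℕ, x ^ (n + 2) / (n + 2)! := by
  have hs := summable_pow_div_factorial x
  rw [exp_eq_exp_ℝ, NormedSpace.exp_eq_tsum_div]
  beta_reduce
  rw [hs.tsum_eq_zero_add, ((summable_nat_add_iff 1).2 hs).tsum_eq_zero_add]
  simp

theorem exp_sub_one_sub_le_sq_div_two_of_nonpos {y : ℝ} (hy : y ≤ 0) :
    exp y - 1 - y ≤ y ^ 2 / 2 := by
  let f : ℝ → ℝ := fun y => 1 + y + y ^ 2 / 2 - exp y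
  have hf : ∀ x, HasDerivAt f (1 + x - exp x) x := fun x => by
    refine ((((hasDerivAt_id x).const_add 1).add ((hasDerivAt_pow 2 x).div_const 2)).sub
      (hasDerivAt_exp x)).congr_deriv ?_
    norm_num
  have hanti : Antitone f := antitone_of_deriv_nonpos (fun x => (hf x).differentiableAt)
    fun x => by rw [(hf x).deriv]; linarith [add_one_le_exp x]
  have := hanti hy
  simp only [f] at this
  norm_num at this
  linarith

theorem sq_mul_exp_sub_one_sub_le {y z : ℝ} (hy : 0 ≤ y) (hyz : y ≤ z) :
    z ^ 2 * (exp y - 1 - y) ≤ y ^ 2 * (exp z - 1 - z) := by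
  rw [exp_sub_one_sub_eq_tsum, exp_sub_one_sub_eq_tsum, ← tsum_mul_left, ← tsum_mul_left]
  refine Summable.tsum_le_tsum (fun n => ?_) ((summable_pow_add_two_div_factorial y).mul_left _)
    ((summable_pow_add_two_div_factorial z).mul_left _)
  rw [mul_div_assoc', mul_div_assoc']
  gcongr ?_ / _
  calc z ^ 2 * y ^ (n + 2) = (y ^ 2 * z ^ 2) * y ^ n := by ring
    _ ≤ (y ^ 2 * z ^ 2) * z ^ n := by gcongr
    _ = y ^ 2 * z ^ (n + 2) := by ring

theorem exp_sub_one_sub_le_of_lt_three {x : ℝ} (hx : 0 ≤ x) (hx3 : x < 3) :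
    exp x - 1 - x ≤ x ^ 2 / (2 * (1 - x / 3)) := by
  have hgeo := (hasSum_geometric_of_lt_one (r := x / 3) (by positivity) (by linarith)).mul_left
    (x ^ 2 / 2)
  have hterm (n : ℕ) : x ^ (n + 2) / (n + 2)! ≤ x ^ 2 / 2 * (x / 3) ^ n := by
    have hfact : (2 * 3 ^ n : ℝ) ≤ (n + 2)! := by
      exact_mod_cast (add_comm 2 n ▸ factorial_mul_pow_le_factorial : 2! * 3 ^ n ≤ (n + 2)!)
    calc x ^ (n + 2) / (n + 2)! ≤ x ^ (n + 2) / (2 * 3 ^ n) := by gcongr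
      _ = x ^ 2 / 2 * (x / 3) ^ n := by rw [div_pow]; ring
  calc exp x - 1 - x ≤ x ^ 2 / 2 * (1 - x / 3)⁻¹ := by
        rw [exp_sub_one_sub_eq_tsum]
        exact hasSum_le hterm (summable_pow_add_two_div_factorial x).hasSum hgeo
    _ = x ^ 2 / (2 * (1 - x / 3)) := by rw [← div_div, div_eq_mul_inv (x ^ 2 / 2)]

theorem exp_mul_le_of_le {h b x : ℝ} (hh : 0 ≤ h) (hb : 0 < b) (hx : x ≤ b) :
    exp (h * x) ≤ 1 + h * x + (exp (h * b) - 1 - h * b) / b ^ 2 * x ^ 2 := by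
  suffices exp (h * x) - 1 - h * x ≤ (exp (h * b) - 1 - h * b) / b ^ 2 * x ^ 2 by linarith
  rw [div_mul_eq_mul_div, le_div_iff₀ (by positivity)]
  rcases le_or_gt (h * x) 0 with hhx | hhx
  · calc (exp (h * x) - 1 - h * x) * b ^ 2 ≤ (h * x) ^ 2 / 2 * b ^ 2 := by
          gcongr; exact exp_sub_one_sub_le_sq_div_two_of_nonpos hhx
      _ = (1 + h * b + (h * b) ^ 2 / 2 - 1 - h * b) * x ^ 2 := by ring
      _ ≤ (exp (h * b) - 1 - h * b) * x ^ 2 := by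
          gcongr; exact quadratic_le_exp_of_nonneg (by positivity)
  · have hpos : 0 < h := lt_of_le_of_ne hh (by rintro rfl; simp at hhx)
    have hmono := sq_mul_exp_sub_one_sub_le hhx.le (mul_le_mul_of_nonneg_left hx hh)
    rw [mul_pow, mul_pow, mul_assoc, mul_assoc] at hmono
    exact le_of_mul_le_mul_left (by linarith) (pow_pos hpos 2)

theorem exp_sub_one_sub_div_sq_mul_sub_mul_le {h v b t : ℝ} (hv : 0 < v) (hb : 0 < b)
    (ht : 0 ≤ t) (hh : h * (v + b * t / 3) = t) :
    (exp (h * b) - 1 - h * b) / b ^ 2 * v - h * t ≤ -t ^ 2 / (2 * v * (1 + b * t / (3 * v))) := by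
  have hD : 0 < v + b * t / 3 := by positivity
  have hh' : h = t / (v + b * t / 3) := by rw [eq_div_iff hD.ne', hh]
  have hh0 : 0 ≤ h := hh' ▸ by positivity
  have hhb : h * b < 3 := by nlinarith
  have hfrac : 1 - h * b / 3 = v / (v + b * t / 3) := by
    rw [eq_div_iff hD.ne']; linear_combination (-b / 3) * hh
  calc (exp (h * b) - 1 - h * b) / b ^ 2 * v - h * t
      ≤ (h * b) ^ 2 / (2 * (1 - h * b / 3)) / b ^ 2 * v - h * t := by
        gcongr; exact exp_sub_one_sub_le_of_lt_three (by positivity) hhb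
    _ = -t ^ 2 / (2 * v * (1 + b * t / (3 * v))) := by
        rw [hfrac, hh']
        field_simp
        ring

end Real

namespace MeasureTheory

variable {Ω : Type*} {m0 : MeasurableSpace Ω} {μ : Measure Ω} {ℱ : Filtration ℕ m0}
  {X : ℕ → Ω → ℝ}

theorem integrable_exp_mul_of_abs_le [IsFiniteMeasure μ] {f : Ω → ℝ}
    (hf : AEStronglyMeasurable f μ) {K : ℝ} (hK : ∀ ω, |f ω| ≤ K) (h : ℝ) :
    Integrable (fun ω => exp (h * f ω)) μ :=
  .of_bound (continuous_exp.comp_aestronglyMeasurable (hf.const_mul h)) (exp (|h| * K))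
    (ae_of_all _ fun ω => by
      rw [norm_of_nonneg (exp_pos _).le, exp_le_exp]
      exact (le_abs_self _).trans (abs_mul h _ ▸ mul_le_mul_of_nonneg_left (hK ω) (abs_nonneg h)))

theorem condExp_exp_mul_le_one_add [IsFiniteMeasure μ] {m : MeasurableSpace Ω} (hm : m ≤ m0)
    {Y : Ω → ℝ} {h b c : ℝ} (hc : ∀ x ≤ b, exp (h * x) ≤ 1 + h * x + c * x ^ 2)
    (hYb : ∀ᵐ ω ∂μ, Y ω ≤ b) (hY : μ[Y | m] =ᵐ[μ] 0) (hYi : Integrable Y μ)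
    (hY2 : Integrable (fun ω => Y ω ^ 2) μ) (hexp : Integrable (fun ω => exp (h * Y ω)) μ) :
    μ[fun ω => exp (h * Y ω) | m] ≤ᵐ[μ] fun ω => 1 + c * μ[fun ω => Y ω ^ 2 | m] ω := by
  have hle : μ[fun ω => exp (h * Y ω) | m] ≤ᵐ[μ] μ[fun ω => 1 + h * Y ω + c * Y ω ^ 2 | m] :=
    condExp_mono hexp (((integrable_const 1).add (hYi.const_mul h)).add (hY2.const_mul c))
      (by filter_upwards [hYb] with ω hω using hc _ hω)
  have hlin : μ[fun ω => 1 + h * Y ω + c * Y ω ^ 2 | m]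
      =ᵐ[μ] μ[fun _ => (1 : ℝ) | m] + h • μ[Y | m] + c • μ[fun ω => Y ω ^ 2 | m] :=
    (condExp_add ((integrable_const 1).add (hYi.smul h)) (hY2.smul c) m).trans
      (((condExp_add (integrable_const 1) (hYi.smul h) m).trans
        (EventuallyEq.rfl.add (condExp_smul h Y m))).add (condExp_smul c _ m))
  filter_upwards [hle, hlin, hY] with ω hle hlin hY
  simpa [hlin, hY, condExp_const hm] using hle

noncomputable def predictableQuadVar (μ : Measure Ω) (ℱ : Filtration ℕ m0) (X : ℕ → Ω → ℝ)
    (n : ℕ) (ω : Ω) : ℝ :=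
  ∑ i ∈ Finset.range n, μ[fun ω' => (X (i + 1) ω' - X i ω') ^ 2 | ℱ i] ω

theorem predictableQuadVar_succ (n : ℕ) :
    predictableQuadVar μ ℱ X (n + 1)
      = predictableQuadVar μ ℱ X n + μ[fun ω' => (X (n + 1) ω' - X n ω') ^ 2 | ℱ n] := by
  funext ω
  simp [predictableQuadVar, Finset.sum_range_succ]

theorem stronglyMeasurable_predictableQuadVar_succ (n : ℕ) :
    StronglyMeasurable[ℱ n] (predictableQuadVar μ ℱ X (n + 1)) :=
  Finset.stronglyMeasurable_fun_sum _ fun _ hi =>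
    stronglyMeasurable_condExp.mono (ℱ.mono (Nat.lt_succ_iff.1 (Finset.mem_range.1 hi)))

theorem stronglyMeasurable_predictableQuadVar (n : ℕ) :
    StronglyMeasurable (predictableQuadVar μ ℱ X n) :=
  Finset.stronglyMeasurable_fun_sum _ fun i _ => stronglyMeasurable_condExp.mono (ℱ.le i)

theorem predictableQuadVar_nonneg (n : ℕ) : 0 ≤ᵐ[μ] predictableQuadVar μ ℱ X n := by
  have hnonneg (i : ℕ) : 0 ≤ᵐ[μ] μ[fun ω' => (X (i + 1) ω' - X i ω') ^ 2 | ℱ i] :=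
    condExp_nonneg (ae_of_all _ fun ω => sq_nonneg _)
  filter_upwards [ae_all_iff.2 hnonneg] with ω hω
  exact Finset.sum_nonneg fun i _ => hω i

theorem Martingale.integrable_exp_mul_sub_predictableQuadVar [IsFiniteMeasure μ]
    (hX : Martingale X ℱ μ) {K : ℝ} (hK : ∀ i ω, |X i ω| ≤ K) {h c : ℝ} (hc : 0 ≤ c) (n : ℕ) :
    Integrable (fun ω => exp (h * X n ω - c * predictableQuadVar μ ℱ X n ω)) μ := by
  have hXm : StronglyMeasurable (X n) := (hX.stronglyMeasurable n).mono (ℱ.le n)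
  refine (integrable_exp_mul_of_abs_le (hX.integrable n).aestronglyMeasurable (hK n) h).mono'
    (continuous_exp.comp_stronglyMeasurable ((hXm.const_mul h).sub
      ((stronglyMeasurable_predictableQuadVar n).const_mul c))).aestronglyMeasurable ?_
  filter_upwards [predictableQuadVar_nonneg n] with ω hω
  rw [norm_of_nonneg (exp_pos _).le, exp_le_exp]
  linarith [mul_nonneg hc hω]

theorem Martingale.condExp_exp_mul_sub_predictableQuadVar_succ_le [IsFiniteMeasure μ]
    (hX : Martingale X ℱ μ) {K : ℝ} (hK : ∀ i ω, |X i ω| ≤ K) {h b c : ℝ} (hc0 : 0 ≤ c)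
    (hc : ∀ x ≤ b, exp (h * x) ≤ 1 + h * x + c * x ^ 2) {k : ℕ}
    (hjump : ∀ᵐ ω ∂μ, X (k + 1) ω - X k ω ≤ b) :
    μ[fun ω => exp (h * X (k + 1) ω - c * predictableQuadVar μ ℱ X (k + 1) ω) | ℱ k]
      ≤ᵐ[μ] fun ω => exp (h * X k ω - c * predictableQuadVar μ ℱ X k ω) := by
  set Δ : Ω → ℝ := fun ω => X (k + 1) ω - X k ω
  set W := μ[fun ω => Δ ω ^ 2 | ℱ k]
  set G : Ω → ℝ := fun ω => exp (h * X k ω - c * predictableQuadVar μ ℱ X (k + 1) ω)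
  have hΔK (ω : Ω) : |Δ ω| ≤ 2 * K := by
    linarith [abs_sub (X (k + 1) ω) (X k ω), hK (k + 1) ω, hK k ω]
  have hΔi : Integrable Δ μ := (hX.integrable _).sub (hX.integrable _)
  have hΔ2 : Integrable (fun ω => Δ ω ^ 2) μ := .of_bound (hΔi.aestronglyMeasurable.pow 2)
    ((2 * K) ^ 2) (ae_of_all _ fun ω => by
      simpa [sq_abs] using pow_le_pow_left₀ (abs_nonneg _) (hΔK ω) 2)
  have hexp := integrable_exp_mul_of_abs_le hΔi.aestronglyMeasurable hΔK h
  have hΔ0 : μ[Δ | ℱ k] =ᵐ[μ] 0 := by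
    filter_upwards [condExp_sub (hX.integrable (k + 1)) (hX.integrable k) (ℱ k),
      hX.condExp_ae_eq k.le_succ, hX.condExp_ae_eq (le_refl k)] with ω h1 h2 h3
    change μ[X (k + 1) - X k | ℱ k] ω = 0
    rw [h1, Pi.sub_apply, h2, h3, sub_self]
  have hGm : StronglyMeasurable[ℱ k] G := continuous_exp.comp_stronglyMeasurable
    (((hX.stronglyAdapted k).const_mul h).sub
      ((stronglyMeasurable_predictableQuadVar_succ k).const_mul c))
  have hsplit : (fun ω => exp (h * X (k + 1) ω - c * predictableQuadVar μ ℱ X (k + 1) ω))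
      = G * fun ω => exp (h * Δ ω) := by
    funext ω
    simp only [G, Δ, Pi.mul_apply, ← exp_add]
    ring_nf
  have hpull := condExp_mul_of_stronglyMeasurable_left hGm
    (hsplit ▸ hX.integrable_exp_mul_sub_predictableQuadVar hK hc0 (k + 1)) hexp
  filter_upwards [hpull, condExp_exp_mul_le_one_add (ℱ.le k) hc hjump hΔ0 hΔi hΔ2 hexp]
    with ω hpull hmgf
  rw [hsplit, hpull, Pi.mul_apply]
  calc G ω * μ[fun ω => exp (h * Δ ω) | ℱ k] ω ≤ G ω * (1 + c * W ω) := by gcongr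
    _ ≤ G ω * exp (c * W ω) := by gcongr; linarith [add_one_le_exp (c * W ω)]
    _ = exp (h * X k ω - c * predictableQuadVar μ ℱ X k ω) := by
        rw [← exp_add, predictableQuadVar_succ, Pi.add_apply]
        simp only [W, Δ]
        ring_nf

theorem Martingale.integral_exp_mul_sub_predictableQuadVar_le_one [IsProbabilityMeasure μ]
    (hX : Martingale X ℱ μ) {K : ℝ} (hK : ∀ i ω, |X i ω| ≤ K) (hX0 : ∀ ω, X 0 ω = 0)
    {h b c : ℝ} (hc0 : 0 ≤ c) (hc : ∀ x ≤ b, exp (h * x) ≤ 1 + h * x + c * x ^ 2) {n : ℕ}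
    (hjump : ∀ i < n, ∀ᵐ ω ∂μ, X (i + 1) ω - X i ω ≤ b) :
    ∫ ω, exp (h * X n ω - c * predictableQuadVar μ ℱ X n ω) ∂μ ≤ 1 := by
  induction n with
  | zero => simp [predictableQuadVar, hX0]
  | succ k ih =>
    calc ∫ ω, exp (h * X (k + 1) ω - c * predictableQuadVar μ ℱ X (k + 1) ω) ∂μ
        = ∫ ω, μ[fun ω => exp (h * X (k + 1) ω - c * predictableQuadVar μ ℱ X (k + 1) ω)
            | ℱ k] ω ∂μ := (integral_condExp (ℱ.le k)).symm
      _ ≤ ∫ ω, exp (h * X k ω - c * predictableQuadVar μ ℱ X k ω) ∂μ :=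
          integral_mono_ae integrable_condExp
            (hX.integrable_exp_mul_sub_predictableQuadVar hK hc0 k)
            (hX.condExp_exp_mul_sub_predictableQuadVar_succ_le hK hc0 hc (hjump k k.lt_succ_self))
      _ ≤ 1 := ih fun i hi => hjump i (hi.trans k.lt_succ_self)

theorem Martingale.integral_exp_mul_le [IsProbabilityMeasure μ]
    (hX : Martingale X ℱ μ) {K : ℝ} (hK : ∀ i ω, |X i ω| ≤ K) (hX0 : ∀ ω, X 0 ω = 0)
    {h b c v : ℝ} (hc0 : 0 ≤ c) (hc : ∀ x ≤ b, exp (h * x) ≤ 1 + h * x + c * x ^ 2) {n : ℕ}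
    (hjump : ∀ i < n, ∀ᵐ ω ∂μ, X (i + 1) ω - X i ω ≤ b)
    (hV : ∀ᵐ ω ∂μ, predictableQuadVar μ ℱ X n ω ≤ v) :
    ∫ ω, exp (h * X n ω) ∂μ ≤ exp (c * v) := by
  have hM := hX.integrable_exp_mul_sub_predictableQuadVar hK hc0 (h := h) n
  calc ∫ ω, exp (h * X n ω) ∂μ
      ≤ ∫ ω, exp (c * v) * exp (h * X n ω - c * predictableQuadVar μ ℱ X n ω) ∂μ := by
        refine integral_mono_ae
          (integrable_exp_mul_of_abs_le (hX.integrable n).aestronglyMeasurable (hK n) h)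
          (hM.const_mul _) ?_
        filter_upwards [hV] with ω hω
        rw [← exp_add, exp_le_exp]
        nlinarith [mul_le_mul_of_nonneg_left hω hc0]
    _ = exp (c * v) * ∫ ω, exp (h * X n ω - c * predictableQuadVar μ ℱ X n ω) ∂μ :=
        integral_const_mul _ _
    _ ≤ exp (c * v) := mul_le_of_le_one_right (exp_pos _).le
          (hX.integral_exp_mul_sub_predictableQuadVar_le_one hK hX0 hc0 hc hjump)

theorem Martingale.submartingale_comp_convex [IsFiniteMeasure μ] (hX : Martingale X ℱ μ)
    {φ : ℝ → ℝ} (hφ : ConvexOn ℝ Set.univ φ) (hφc : Continuous φ)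
    (hint : ∀ i, Integrable (fun ω => φ (X i ω)) μ) :
    Submartingale (fun i ω => φ (X i ω)) ℱ μ := by
  refine ⟨fun i => hφc.comp_stronglyMeasurable (hX.stronglyAdapted i), fun i j hij => ?_, hint⟩
  filter_upwards [hφ.map_condExp_le_univ (ℱ.le i) hφc.lowerSemicontinuous (hX.integrable j)
    (hint j), hX.condExp_ae_eq hij] with ω hle heq
  rwa [Function.comp_apply, heq] at hle

theorem Submartingale.measure_exists_le_toReal_le [IsFiniteMeasure μ] {f : ℕ → Ω → ℝ}
    (hf : Submartingale f ℱ μ) (hnonneg : 0 ≤ f) {ε : ℝ} (hε : 0 < ε) (n : ℕ) :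
    (μ {ω | ∃ i ≤ n, ε ≤ f i ω}).toReal ≤ (∫ ω, f n ω ∂μ) / ε := by
  have hmax := maximal_ineq hf hnonneg (ε := ε.toNNReal) n
  simp only [Real.coe_toNNReal _ hε.le, Finset.le_sup'_iff, Finset.mem_range,
    Nat.lt_succ_iff] at hmax
  have hfn : 0 ≤ f n := hnonneg n
  have hint := integral_nonneg (μ := μ.restrict {ω | ∃ i ≤ n, ε ≤ f i ω}) hfn
  have hA := ENNReal.toReal_mono ENNReal.ofReal_ne_top hmax
  rw [ENNReal.toReal_mul, ENNReal.toReal_ofReal hint, ENNReal.coe_toReal,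
    Real.coe_toNNReal _ hε.le] at hA
  rw [le_div_iff₀ hε, mul_comm]
  exact hA.trans (setIntegral_le_integral (hf.integrable n) (ae_of_all _ hfn))

end MeasureTheory

/-- McDiarmid's martingale inequality (Theorem 3.15 of McDiarmid 1998),
strengthened to the running maximum via Doob's inequality: if `(X_i)_{i=0}^n`
is a bounded martingale with `X_0 = 0`, whose sum of predictable quadratic
variations is essentially bounded by `v` and whose one-step increments are
essentially bounded by `b`, then for all `t ≥ 0`,
`P(max_{0 ≤ i ≤ n} X_i ≥ t) ≤ exp(-t²/(2v(1 + bt/(3v))))`. -/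
theorem stmt7 {Ω : Type*} {m0 : MeasurableSpace Ω} (μ : Measure Ω)
    [IsProbabilityMeasure μ] (ℱ : Filtration ℕ m0) (n : ℕ) (X : ℕ → Ω → ℝ)
    (hmart : Martingale X ℱ μ) (hbdd : ∃ K : ℝ, ∀ i ω, |X i ω| ≤ K)
    (hX0 : ∀ ω, X 0 ω = 0) (v b : ℝ) (hv : 0 < v) (hb : 0 < b)
    (hV : ∀ᵐ ω ∂μ, ∑ i ∈ Finset.range n,
        (μ[fun ω' => (X (i + 1) ω' - X i ω') ^ 2 | ℱ i]) ω ≤ v)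
    (hjump : ∀ i < n, ∀ᵐ ω ∂μ, X (i + 1) ω - X i ω ≤ b)
    (t : ℝ) (ht : 0 ≤ t) :
    (μ {ω | ∃ i ≤ n, t ≤ X i ω}).toReal
      ≤ Real.exp (-t ^ 2 / (2 * v * (1 + b * t / (3 * v)))) := by
  obtain ⟨K, hK⟩ := hbdd
  set h := t / (v + b * t / 3)
  have hhD : h * (v + b * t / 3) = t := div_mul_cancel₀ _ (by positivity)
  have hh : 0 ≤ h := by positivity
  set c := (exp (h * b) - 1 - h * b) / b ^ 2
  have hc0 : 0 ≤ c := div_nonneg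
    (by nlinarith [quadratic_le_exp_of_nonneg (by positivity : 0 ≤ h * b)]) (sq_nonneg b)
  have hmgf : ∫ ω, exp (h * X n ω) ∂μ ≤ exp (c * v) :=
    hmart.integral_exp_mul_le hK hX0 hc0 (fun x hx => exp_mul_le_of_le hh hb hx) hjump hV
  have hsub : Submartingale (fun i ω => exp (h * X i ω)) ℱ μ :=
    (hmart.smul h).submartingale_comp_convex convexOn_exp continuous_exp fun i =>
      integrable_exp_mul_of_abs_le (hmart.integrable i).aestronglyMeasurable (hK i) h
  calc (μ {ω | ∃ i ≤ n, t ≤ X i ω}).toReal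
      ≤ (μ {ω | ∃ i ≤ n, exp (h * t) ≤ exp (h * X i ω)}).toReal :=
        ENNReal.toReal_mono (measure_ne_top _ _) (measure_mono fun ω ⟨i, hi, hti⟩ =>
          ⟨i, hi, exp_le_exp.2 (mul_le_mul_of_nonneg_left hti hh)⟩)
    _ ≤ (∫ ω, exp (h * X n ω) ∂μ) / exp (h * t) :=
        hsub.measure_exists_le_toReal_le (fun _ _ => (exp_pos _).le) (exp_pos _) n
    _ ≤ exp (c * v) / exp (h * t) := by gcongr
    _ = exp (c * v - h * t) := (exp_sub _ _).symm
    _ ≤ exp (-t ^ 2 / (2 * v * (1 + b * t / (3 * v)))) :=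
        exp_le_exp.2 (exp_sub_one_sub_div_sq_mul_sub_mul_le hv hb ht hhD)
end

section
/- Let T be a plane tree with n nodes and let (Q_i^b(T))_{i=0}^n be the breadth-first-search queue process: Q_0 = 1 and Q_i = Q_{i-1} - 1 + c_{u_i} where u_1,...,u_n is the BFS order of the nodes and c_{u_i} is the number of children of u_i. Then the width of T satisfies w(T) ≤ max_{0 ≤ i ≤ n} Q_i^b(T) ≤ 2·w(T), where w(T) = max_k Z_k(T) and Z_k(T) is the number of nodes at depth k. -/
namespace PlaneTree

/-- The sequence of child-counts of the nodes of a forest, in breadth-first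
search order (children are appended to the back of the queue of pending
subtrees). -/
def bfsSeq : List PlaneTree → List ℕ
  | [] => []
  | node l :: ts => l.length :: bfsSeq (ts ++ l)
termination_by l => (l.map size).sum
decreasing_by
  simp only [List.map_append, List.sum_append, List.map_cons, List.sum_cons, size]
  have : (l.attach.map fun t => size t.1).sum = (l.map size).sum := by
    congr 1; simp [List.attach_map_val]
  omega

/-- The queue process associated to an exploration child-count sequence `s`:
`Q_0 = 1`, `Q_i = Q_{i-1} - 1 + s_i`. -/
def queue (s : List ℕ) (i : ℕ) : ℤ := 1 + ∑ j ∈ Finset.range i, ((s.getD j 1 : ℤ) - 1)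

/-!
After `i` exploration steps the BFS queue is the forest of pending subtrees
`bfsStep^[i] [T]`, and `Q_i` is its length. If the explored nodes are the levels above `k`
together with the first `r` nodes of level `k`, this queue consists of the remaining nodes of
level `k` followed by the children of the first `r` ones, a prefix of level `k + 1`; hence
`Q_i ≤ Z_k + Z_{k+1} ≤ 2 w(T)`. When level `k` is about to be explored the queue is exactly that
level, so choosing `k` with `Z_k = w(T)` gives `Q_i = w(T)`.
-/

def children : PlaneTree → List PlaneTree
  | node l => l

def bfsStep : List PlaneTree → List PlaneTree
  | [] => []
  | t :: ts => ts ++ t.children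

def offspring (F : List PlaneTree) : List PlaneTree := F.flatMap children

def level : ℕ → List PlaneTree → List PlaneTree
  | 0, F => F
  | k + 1, F => offspring (level k F)

/-- The BFS queue while a level `L` is being explored, after its first `r` nodes. -/
def frontier (L : List PlaneTree) (r : ℕ) : List PlaneTree :=
  L.drop r ++ offspring (L.take r)

lemma size_node (l : List PlaneTree) : size (node l) = 1 + (l.map size).sum := by
  rw [size, List.attach_map_val (f := size)]

lemma one_le_size (T : PlaneTree) : 1 ≤ T.size := by
  cases T with | node l => rw [size_node]; omega

lemma nodesAt_le_size (k : ℕ) (T : PlaneTree) : T.nodesAt k ≤ T.size := by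
  induction k generalizing T with
  | zero => exact one_le_size T
  | succ k ih =>
    obtain ⟨l⟩ := T
    rw [nodesAt, size_node]
    have : (l.map (nodesAt k)).sum ≤ (l.map size).sum := List.sum_le_sum fun t _ => ih t
    omega

lemma bddAbove_range_nodesAt (T : PlaneTree) : BddAbove (Set.range fun k => T.nodesAt k) :=
  ⟨T.size, by rintro _ ⟨k, rfl⟩; exact nodesAt_le_size k T⟩

lemma nodesAt_le_width (k : ℕ) (T : PlaneTree) : T.nodesAt k ≤ T.width :=
  le_csSup (bddAbove_range_nodesAt T) ⟨k, rfl⟩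

lemma exists_nodesAt_eq_width (T : PlaneTree) : ∃ k, T.nodesAt k = T.width :=
  Nat.sSup_mem (Set.range_nonempty _) (bddAbove_range_nodesAt T)

lemma one_le_width (T : PlaneTree) : 1 ≤ T.width :=
  nodesAt_le_width 0 T

lemma bfsSeq_cons (l ts : List PlaneTree) :
    bfsSeq (node l :: ts) = l.length :: bfsSeq (ts ++ l) := by
  rw [bfsSeq]

lemma bfsSeq_bfsStep (F : List PlaneTree) : bfsSeq (bfsStep F) = (bfsSeq F).tail := by
  match F with
  | [] => simp [bfsStep, bfsSeq]
  | node l :: ts => rw [bfsSeq_cons]; rfl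

lemma bfsSeq_iterate_bfsStep (i : ℕ) (F : List PlaneTree) :
    bfsSeq (bfsStep^[i] F) = (bfsSeq F).drop i := by
  induction i with
  | zero => rfl
  | succ i ih => rw [Function.iterate_succ_apply', bfsSeq_bfsStep, ih, List.tail_drop]

lemma length_bfsSeq (F : List PlaneTree) : (bfsSeq F).length = (F.map size).sum := by
  induction F using bfsSeq.induct with
  | case1 => simp [bfsSeq]
  | case2 l ts ih => simp [bfsSeq_cons, ih, size_node]; omega

lemma length_bfsStep (F : List PlaneTree) :
    ((bfsStep F).length : ℤ) = F.length + ((bfsSeq F).headD 1 - 1) := by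
  match F with
  | [] => simp [bfsStep, bfsSeq]
  | node l :: ts => simp [bfsStep, bfsSeq_cons, children]

/-- Past the end of `bfsSeq F` both sides stay `0`, thanks to the default value `1` of
`getD`. -/
lemma length_iterate_bfsStep (F : List PlaneTree) (i : ℕ) :
    ((bfsStep^[i] F).length : ℤ) =
      F.length + ∑ j ∈ Finset.range i, (((bfsSeq F).getD j 1 : ℤ) - 1) := by
  induction i with
  | zero => simp
  | succ i ih =>
    have hhead : (bfsSeq (bfsStep^[i] F)).headD 1 = (bfsSeq F).getD i 1 := by
      rw [bfsSeq_iterate_bfsStep, List.headD_eq_head?, List.head?_drop,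
        List.getD_eq_getElem?_getD]
    rw [Function.iterate_succ_apply', length_bfsStep, ih, hhead, Finset.sum_range_succ]
    ring

lemma queue_bfsSeq_singleton (T : PlaneTree) (i : ℕ) :
    queue (bfsSeq [T]) i = (bfsStep^[i] [T]).length := by
  rw [length_iterate_bfsStep, queue, List.length_singleton, Nat.cast_one]

lemma lt_length_bfsSeq_of_iterate_ne_nil {F : List PlaneTree} {i : ℕ}
    (h : bfsStep^[i] F ≠ []) : i < (bfsSeq F).length := by
  obtain ⟨⟨l⟩, ts, hts⟩ := List.exists_cons_of_ne_nil h
  have : (bfsSeq F).drop i ≠ [] := by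
    rw [← bfsSeq_iterate_bfsStep, hts, bfsSeq_cons]
    exact List.cons_ne_nil _ _
  simpa using this

lemma offspring_append (F G : List PlaneTree) :
    offspring (F ++ G) = offspring F ++ offspring G :=
  List.flatMap_append

lemma level_succ (k : ℕ) (F : List PlaneTree) : level (k + 1) F = offspring (level k F) := rfl

lemma level_succ' (k : ℕ) (F : List PlaneTree) : level (k + 1) F = level k (offspring F) := by
  induction k with
  | zero => rfl
  | succ k ih => rw [level, ih, level]

lemma length_level (k : ℕ) (F : List PlaneTree) :
    (level k F).length = (F.map (nodesAt k)).sum := by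
  induction k generalizing F with
  | zero => simp [level, nodesAt]
  | succ k ih =>
    rw [level_succ', ih, offspring, List.flatMap, List.map_flatten, List.sum_flatten,
      List.map_map]
    congr 1
    rw [List.map_map]
    refine List.map_congr_left fun t _ => ?_
    obtain ⟨l⟩ := t
    rfl

lemma length_level_singleton (k : ℕ) (T : PlaneTree) : (level k [T]).length = T.nodesAt k := by
  simp [length_level]

lemma frontier_zero (L : List PlaneTree) : frontier L 0 = L := by
  simp [frontier, offspring]

lemma frontier_length (L : List PlaneTree) : frontier L L.length = offspring L := by
  simp [frontier]

lemma bfsStep_frontier {L : List PlaneTree} {r : ℕ} (h : r < L.length) :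
    bfsStep (frontier L r) = frontier L (r + 1) := by
  rw [frontier, frontier, List.drop_eq_getElem_cons h, List.cons_append, bfsStep,
    List.take_add_one, List.getElem?_eq_getElem h, Option.toList_some, offspring_append,
    List.append_assoc]
  simp [offspring]

lemma iterate_bfsStep_eq_frontier {L : List PlaneTree} {r : ℕ} (h : r ≤ L.length) :
    bfsStep^[r] L = frontier L r := by
  induction r with
  | zero => exact (frontier_zero L).symm
  | succ r ih => rw [Function.iterate_succ_apply', ih (by omega), bfsStep_frontier h]

lemma exists_iterate_bfsStep_eq_level (k : ℕ) (F : List PlaneTree) :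
    ∃ i, bfsStep^[i] F = level k F := by
  induction k with
  | zero => exact ⟨0, rfl⟩
  | succ k ih =>
    obtain ⟨i, hi⟩ := ih
    refine ⟨(level k F).length + i, ?_⟩
    rw [Function.iterate_add_apply, hi, iterate_bfsStep_eq_frontier le_rfl, frontier_length,
      level_succ]

lemma exists_iterate_bfsStep_eq_frontier (F : List PlaneTree) (i : ℕ) :
    ∃ k r, r ≤ (level k F).length ∧ bfsStep^[i] F = frontier (level k F) r := by
  induction i with
  | zero => exact ⟨0, 0, Nat.zero_le _, (frontier_zero F).symm⟩
  | succ i ih =>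
    obtain ⟨k, r, hr, hi⟩ := ih
    rw [Function.iterate_succ_apply', hi]
    rcases hr.lt_or_eq with hr | rfl
    · exact ⟨k, r + 1, hr, bfsStep_frontier hr⟩
    rw [frontier_length, ← level_succ]
    rcases eq_or_ne (level (k + 1) F) [] with hnil | hne
    · exact ⟨k + 1, 0, Nat.zero_le _, by rw [hnil, frontier_zero]; rfl⟩
    · have hpos : 0 < (level (k + 1) F).length := List.length_pos_iff.mpr hne
      refine ⟨k + 1, 1, hpos, ?_⟩
      rw [← bfsStep_frontier hpos, frontier_zero]

lemma length_frontier_le (L : List PlaneTree) (r : ℕ) :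
    (frontier L r).length ≤ L.length + (offspring L).length := by
  have hsplit : offspring L = offspring (L.take r) ++ offspring (L.drop r) := by
    rw [← offspring_append, List.take_append_drop]
  rw [frontier, List.length_append, hsplit, List.length_append, List.length_drop]
  omega

end PlaneTree

open PlaneTree in
/-- The BFS queue process of a plane tree `T` dominates the width and is at
most twice the width: `w(T) ≤ max_{0 ≤ i ≤ n} Q_i^b(T) ≤ 2·w(T)`. -/
theorem stmt12 (T : PlaneTree) :
    (∃ i ≤ T.size, (T.width : ℤ) ≤ queue (bfsSeq [T]) i) ∧
      ∀ i ≤ T.size, queue (bfsSeq [T]) i ≤ 2 * T.width := by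
  constructor
  · obtain ⟨k, hk⟩ := exists_nodesAt_eq_width T
    obtain ⟨i, hi⟩ := exists_iterate_bfsStep_eq_level k [T]
    have hlen : (bfsStep^[i] [T]).length = T.width := by
      rw [hi, length_level_singleton, hk]
    have hne : bfsStep^[i] [T] ≠ [] := by
      have := one_le_width T
      rw [← List.length_pos_iff]; omega
    have hlt := lt_length_bfsSeq_of_iterate_ne_nil hne
    rw [length_bfsSeq, List.map_singleton, List.sum_singleton] at hlt
    exact ⟨i, hlt.le, by rw [queue_bfsSeq_singleton, hlen]⟩
  · intro i _
    obtain ⟨k, r, -, hi⟩ := exists_iterate_bfsStep_eq_frontier [T] i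
    have hbound := length_frontier_le (level k [T]) r
    rw [← level_succ, length_level_singleton, length_level_singleton] at hbound
    have := nodesAt_le_width k T
    have := nodesAt_le_width (k + 1) T
    rw [queue_bfsSeq_singleton, hi]
    omega
end

section
/- Let n, k be positive integers with k < n, and let (s_1,...,s_k) be a uniformly random vector of non-negative integers summing to N. Then the coordinates s_1,...,s_k are negatively associated; in particular, for any subset J ⊆ [k] and t > 0, P(sum_{i ∈ J} s_i ≥ (1+x)·N·|J|/k) satisfies the standard Chernoff-Hoeffding upper bounds that would hold for independent variables with the same marginals. -/
/-!
Condition on `a = ∑ i ∈ A, s i`: given `a`, the coordinates in `A` and those in `Aᶜ` are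
independent uniform compositions of `a` and `N - a`. For a monotone `f`, the mean of `f` over the
compositions of `r` supported on `X` is non-decreasing in `r`: adding a unit at a position `i ∈ X`
maps compositions of `r` to compositions of `r + 1`, every `w` being hit `w i` times from `i`, so
`(r + #X) • ∑_r f ≤ (r + 1) • ∑_{r+1} f`, with equality for `f = 1`. Hence `E[f | a]` increases
and `E[g | a]` decreases with `a`, and Chebyshev's sum inequality gives `E[f g] ≤ E[f] E[g]`.
-/

open Finset
open scoped BigOperators

namespace Finset

variable {ι : Type*} [DecidableEq ι]

section Union

variable {μ : Type*} [AddCommMonoid μ] [HasAntidiagonal μ] [DecidableEq μ] {s t : Finset ι}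

lemma apply_eq_zero_of_mem_piAntidiag {n : μ} {f : ι → μ} {i : ι} (hf : f ∈ piAntidiag s n)
    (hi : i ∉ s) : f i = 0 := by
  by_contra h
  exact hi ((mem_piAntidiag.1 hf).2 i h)

lemma piecewise_mem_piAntidiag (s : Finset ι) (x : ι → μ) :
    s.piecewise x 0 ∈ piAntidiag s (∑ i ∈ s, x i) := by
  refine mem_piAntidiag.2 ⟨sum_congr rfl fun i hi => piecewise_eq_of_mem _ _ _ hi, fun i hi => ?_⟩
  by_contra h
  exact hi (piecewise_eq_of_notMem _ _ _ h)

lemma add_apply_eq_left_of_mem_piAntidiag (hst : Disjoint s t) {b : μ} {v : ι → μ}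
    (hv : v ∈ piAntidiag t b) (u : ι → μ) {i : ι} (hi : i ∈ s) : (u + v) i = u i := by
  simp [apply_eq_zero_of_mem_piAntidiag hv (disjoint_left.1 hst hi)]

lemma sum_add_eq_of_mem_piAntidiag (hst : Disjoint s t) {a b : μ} {u v : ι → μ}
    (hu : u ∈ piAntidiag s a) (hv : v ∈ piAntidiag t b) : ∑ i ∈ s, (u + v) i = a := by
  rw [← (mem_piAntidiag.1 hu).1]
  exact sum_congr rfl fun i hi => add_apply_eq_left_of_mem_piAntidiag hst hv u hi

lemma piecewise_add_of_mem_piAntidiag (hst : Disjoint s t) {a b : μ} {u v : ι → μ}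
    (hu : u ∈ piAntidiag s a) (hv : v ∈ piAntidiag t b) : s.piecewise (u + v) 0 = u := by
  ext i
  by_cases his : i ∈ s
  · simp [his, add_apply_eq_left_of_mem_piAntidiag hst hv u his]
  · simp [his, apply_eq_zero_of_mem_piAntidiag hu his]

lemma piecewise_add_piecewise_of_mem_piAntidiag (hst : Disjoint s t) {n : μ} {x : ι → μ}
    (hx : x ∈ piAntidiag (s ∪ t) n) : s.piecewise x 0 + t.piecewise x 0 = x := by
  ext i
  by_cases his : i ∈ s
  · simp [his, disjoint_left.1 hst his]
  by_cases hit : i ∈ t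
  · simp [his, hit]
  · simp [his, hit, apply_eq_zero_of_mem_piAntidiag hx (notMem_union.2 ⟨his, hit⟩)]

lemma sum_piAntidiag_union (hst : Disjoint s t) (n : μ) {M : Type*} [AddCommMonoid M]
    (F : (ι → μ) → M) :
    ∑ x ∈ piAntidiag (s ∪ t) n, F x =
      ∑ p ∈ antidiagonal n, ∑ u ∈ piAntidiag s p.1, ∑ v ∈ piAntidiag t p.2, F (u + v) := by
  simp_rw [← sum_product', sum_sigma']
  refine sum_nbij' (fun x => ⟨(∑ i ∈ s, x i, ∑ i ∈ t, x i), (s.piecewise x 0, t.piecewise x 0)⟩)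
    (fun z => z.2.1 + z.2.2) ?_ ?_ ?_ ?_ ?_
  · intro x hx
    simp only [mem_sigma, HasAntidiagonal.mem_antidiagonal, mem_product]
    exact ⟨by rw [← sum_union hst, (mem_piAntidiag.1 hx).1], piecewise_mem_piAntidiag s x,
      piecewise_mem_piAntidiag t x⟩
  · rintro ⟨⟨a, b⟩, u, v⟩ hz
    simp only [mem_sigma, HasAntidiagonal.mem_antidiagonal, mem_product] at hz ⊢
    obtain ⟨rfl, hu, hv⟩ := hz
    refine mem_piAntidiag.2 ⟨?_, fun i hi => ?_⟩
    · rw [sum_union hst, sum_add_eq_of_mem_piAntidiag hst hu hv, add_comm u,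
        sum_add_eq_of_mem_piAntidiag hst.symm hv hu]
    · rcases eq_or_ne (u i) 0 with h | h
      · exact mem_union_right _ ((mem_piAntidiag.1 hv).2 i (by simpa [h] using hi))
      · exact mem_union_left _ ((mem_piAntidiag.1 hu).2 i h)
  · exact fun x hx => piecewise_add_piecewise_of_mem_piAntidiag hst hx
  · rintro ⟨⟨a, b⟩, u, v⟩ hz
    simp only [mem_sigma, HasAntidiagonal.mem_antidiagonal, mem_product] at hz
    obtain ⟨-, hu, hv⟩ := hz
    have hsum_t := sum_add_eq_of_mem_piAntidiag hst.symm hv hu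
    have hpiece_t := piecewise_add_of_mem_piAntidiag hst.symm hv hu
    rw [add_comm v u] at hsum_t hpiece_t
    simp only [sum_add_eq_of_mem_piAntidiag hst hu hv, piecewise_add_of_mem_piAntidiag hst hu hv,
      hsum_t, hpiece_t]
  · intro x hx
    rw [piecewise_add_piecewise_of_mem_piAntidiag hst hx]

lemma sum_mul_eq_sum_expect_mul_expect (hst : Disjoint s t) (n : μ) {F G : (ι → μ) → ℝ}
    (hF : DependsOn F s) (hG : DependsOn G t) :
    ∑ x ∈ piAntidiag (s ∪ t) n, F x * G x =
      ∑ x ∈ piAntidiag (s ∪ t) n, (𝔼 u ∈ piAntidiag s (∑ i ∈ s, x i), F u) *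
        𝔼 v ∈ piAntidiag t (∑ i ∈ t, x i), G v := by
  rw [sum_piAntidiag_union hst, sum_piAntidiag_union hst]
  refine sum_congr rfl fun p _ => ?_
  calc ∑ u ∈ piAntidiag s p.1, ∑ v ∈ piAntidiag t p.2, F (u + v) * G (u + v)
      = ∑ u ∈ piAntidiag s p.1, ∑ v ∈ piAntidiag t p.2, F u * G v := by
        refine sum_congr rfl fun u hu => sum_congr rfl fun v hv => ?_
        have hFu : F (u + v) = F u := hF fun i hi => add_apply_eq_left_of_mem_piAntidiag hst hv u hi
        have hGv : G (u + v) = G v := hG fun i hi => by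
          rw [add_comm]; exact add_apply_eq_left_of_mem_piAntidiag hst.symm hu v hi
        rw [hFu, hGv]
    _ = (∑ _u ∈ piAntidiag s p.1, 𝔼 u ∈ piAntidiag s p.1, F u) *
          ∑ _v ∈ piAntidiag t p.2, 𝔼 v ∈ piAntidiag t p.2, G v := by
        rw [← sum_mul_sum, sum_const, card_smul_expect, sum_const, card_smul_expect]
    _ = _ := by
        rw [sum_mul_sum]
        refine sum_congr rfl fun u hu => sum_congr rfl fun v hv => ?_
        rw [sum_add_eq_of_mem_piAntidiag hst hu hv, add_comm u,
          sum_add_eq_of_mem_piAntidiag hst.symm hv hu]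

end Union

section Nat

variable {X : Finset ι}

lemma piAntidiag_nonempty (hX : X.Nonempty) (r : ℕ) : (piAntidiag X r).Nonempty := by
  obtain ⟨i, hi⟩ := hX
  refine ⟨Pi.single i r, mem_piAntidiag.2 ⟨by rw [sum_pi_single', if_pos hi], fun j hj => ?_⟩⟩
  rcases eq_or_ne j i with rfl | hji
  · exact hi
  · simp [hji] at hj

lemma single_one_le_of_ne_zero {w : ι → ℕ} {i : ι} (hwi : w i ≠ 0) : Pi.single i 1 ≤ w :=
  fun j => by
    rcases eq_or_ne j i with rfl | hji
    · simpa [Nat.one_le_iff_ne_zero] using hwi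
    · simp [hji]

lemma sum_add_single (u : ι → ℕ) {i : ι} (hi : i ∈ X) :
    X.sum (u + Pi.single i 1) = X.sum u + 1 :=
  calc X.sum (u + Pi.single i 1) = X.sum u + ∑ j ∈ X, (Pi.single i 1 : ι → ℕ) j := sum_add_distrib
    _ = X.sum u + 1 := by rw [sum_pi_single', if_pos hi]

lemma add_single_mem_piAntidiag {r : ℕ} {u : ι → ℕ} {i : ι} (hu : u ∈ piAntidiag X r)
    (hi : i ∈ X) : u + Pi.single i 1 ∈ piAntidiag X (r + 1) := by
  refine mem_piAntidiag.2 ⟨by rw [sum_add_single u hi, (mem_piAntidiag.1 hu).1], fun j hj => ?_⟩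
  rcases eq_or_ne j i with rfl | hji
  · exact hi
  · exact (mem_piAntidiag.1 hu).2 j (by simpa [hji] using hj)

lemma sub_single_mem_piAntidiag {r : ℕ} {w : ι → ℕ} {i : ι} (hw : w ∈ piAntidiag X (r + 1))
    (hi : i ∈ X) (hwi : w i ≠ 0) : w - Pi.single i 1 ∈ piAntidiag X r := by
  refine mem_piAntidiag.2 ⟨?_, fun j hj => (mem_piAntidiag.1 hw).2 j fun h => hj (by simp [h])⟩
  have hsum := (mem_piAntidiag.1 hw).1
  rw [← tsub_add_cancel_of_le (single_one_le_of_ne_zero hwi), sum_add_single _ hi] at hsum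
  exact Nat.add_right_cancel hsum

lemma sum_sum_succ_smul_add_single {M : Type*} [AddCommMonoid M] (r : ℕ) (F : (ι → ℕ) → M) :
    ∑ u ∈ piAntidiag X r, ∑ i ∈ X, (u i + 1) • F (u + Pi.single i 1) =
      ∑ w ∈ piAntidiag X (r + 1), ∑ i ∈ X, w i • F w := by
  rw [← sum_product', ← sum_product']
  refine sum_bij_ne_zero (fun p _ _ => (p.1 + Pi.single p.2 1, p.2)) ?_ ?_ ?_ ?_
  · rintro ⟨u, i⟩ hp -
    rw [mem_product] at hp ⊢
    exact ⟨add_single_mem_piAntidiag hp.1 hp.2, hp.2⟩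
  · rintro ⟨u, i⟩ - - ⟨u', i'⟩ - - h
    simp only [Prod.mk.injEq] at h
    obtain ⟨h, rfl⟩ := h
    simpa using h
  · rintro ⟨w, i⟩ hp hne
    rw [mem_product] at hp
    have hwi : w i ≠ 0 := fun h => hne (by simp [h])
    have hw : w - Pi.single i 1 + Pi.single i 1 = w :=
      tsub_add_cancel_of_le (single_one_le_of_ne_zero hwi)
    refine ⟨(w - Pi.single i 1, i), mem_product.2 ⟨sub_single_mem_piAntidiag hp.1 hp.2 hwi, hp.2⟩,
      ?_, by simp only [hw]⟩
    simpa [Nat.sub_add_cancel (Nat.one_le_iff_ne_zero.2 hwi), hw] using hne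
  · rintro ⟨u, i⟩ - -
    simp

lemma sum_succ_of_mem_piAntidiag {r : ℕ} {u : ι → ℕ} (hu : u ∈ piAntidiag X r) :
    ∑ i ∈ X, (u i + 1) = r + #X := by
  rw [sum_add_distrib, (mem_piAntidiag.1 hu).1, card_eq_sum_ones]

lemma card_piAntidiag_succ (X : Finset ι) (r : ℕ) :
    (r + #X) * #(piAntidiag X r) = (r + 1) * #(piAntidiag X (r + 1)) := by
  have h := sum_sum_succ_smul_add_single (X := X) r fun _ => (1 : ℕ)
  simp only [smul_eq_mul, mul_one] at h
  rw [sum_congr rfl fun u hu => sum_succ_of_mem_piAntidiag hu,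
    sum_congr rfl fun w hw => (mem_piAntidiag.1 hw).1] at h
  simpa [mul_comm] using h

lemma smul_sum_le_smul_sum_piAntidiag_succ {f : (ι → ℕ) → ℝ} (hf : Monotone f) (r : ℕ) :
    (r + #X) • ∑ u ∈ piAntidiag X r, f u ≤ (r + 1) • ∑ w ∈ piAntidiag X (r + 1), f w := by
  calc (r + #X) • ∑ u ∈ piAntidiag X r, f u
      = ∑ u ∈ piAntidiag X r, ∑ i ∈ X, (u i + 1) • f u := by
        rw [smul_sum]
        exact sum_congr rfl fun u hu => by rw [← sum_smul, sum_succ_of_mem_piAntidiag hu]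
    _ ≤ ∑ u ∈ piAntidiag X r, ∑ i ∈ X, (u i + 1) • f (u + Pi.single i 1) := by
        gcongr with u _ i _
        exact hf le_self_add
    _ = ∑ w ∈ piAntidiag X (r + 1), ∑ i ∈ X, w i • f w := sum_sum_succ_smul_add_single r f
    _ = (r + 1) • ∑ w ∈ piAntidiag X (r + 1), f w := by
        rw [smul_sum]
        exact sum_congr rfl fun w hw => by rw [← sum_smul, (mem_piAntidiag.1 hw).1]

lemma monotone_expect_piAntidiag (hX : X.Nonempty) {f : (ι → ℕ) → ℝ} (hf : Monotone f) :
    Monotone fun r => 𝔼 u ∈ piAntidiag X r, f u := by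
  refine monotone_nat_of_le_succ fun r => ?_
  have hc := (piAntidiag_nonempty hX r).card_pos
  have hc' := (piAntidiag_nonempty hX (r + 1)).card_pos
  have hcard : ((r : ℝ) + #X) * #(piAntidiag X r) = (r + 1) * #(piAntidiag X (r + 1)) := by
    exact_mod_cast card_piAntidiag_succ X r
  have hsum := smul_sum_le_smul_sum_piAntidiag_succ (X := X) hf r
  simp only [nsmul_eq_mul, Nat.cast_add, Nat.cast_one] at hsum
  rw [expect_eq_sum_div_card, expect_eq_sum_div_card,
    div_le_div_iff₀ (by exact_mod_cast hc) (by exact_mod_cast hc')]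
  refine le_of_mul_le_mul_left ?_ (by positivity : (0 : ℝ) < r + 1)
  calc ((r : ℝ) + 1) * ((∑ u ∈ piAntidiag X r, f u) * #(piAntidiag X (r + 1)))
      = (∑ u ∈ piAntidiag X r, f u) * ((r + #X) * #(piAntidiag X r)) := by rw [hcard]; ring
    _ ≤ ((r + 1) * ∑ w ∈ piAntidiag X (r + 1), f w) * #(piAntidiag X r) := by
        rw [← mul_assoc, mul_comm (∑ u ∈ piAntidiag X r, f u)]
        gcongr
    _ = (r + 1) * ((∑ w ∈ piAntidiag X (r + 1), f w) * #(piAntidiag X r)) := by ring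

end Nat

end Finset

section NegativelyAssociated

variable {ι α : Type*}

/-- Negative association of the coordinates of a uniformly random element of `D`. -/
def NegativelyAssociated [Preorder α] (D : Finset (ι → α)) : Prop :=
  ∀ A B : Finset ι, Disjoint A B → ∀ f g : (ι → α) → ℝ, Monotone f → Monotone g →
    DependsOn f A → DependsOn g B → 𝔼 s ∈ D, f s * g s ≤ (𝔼 s ∈ D, f s) * 𝔼 s ∈ D, g s

lemma NegativelyAssociated.expect_prod_le_prod_expect [Preorder α]
    {D : Finset (ι → α)} (hD : NegativelyAssociated D) {φ : ι → α → ℝ} (hφ : ∀ i, Monotone (φ i))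
    (hφ₀ : ∀ i x, 0 ≤ φ i x) (J : Finset ι) :
    𝔼 s ∈ D, ∏ i ∈ J, φ i (s i) ≤ ∏ i ∈ J, 𝔼 s ∈ D, φ i (s i) := by
  induction J using Finset.cons_induction with
  | empty =>
    rcases D.eq_empty_or_nonempty with rfl | hne
    · simp
    · simp [expect_const hne]
  | cons j J hj ih =>
    simp only [prod_cons]
    have hprod : Monotone fun s : ι → α => ∏ i ∈ J, φ i (s i) := fun s t hst =>
      prod_le_prod (fun i _ => hφ₀ i _) fun i _ => hφ i (hst i)
    calc 𝔼 s ∈ D, φ j (s j) * ∏ i ∈ J, φ i (s i)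
        ≤ (𝔼 s ∈ D, φ j (s j)) * 𝔼 s ∈ D, ∏ i ∈ J, φ i (s i) :=
          hD {j} J (disjoint_singleton_left.2 hj) _ _ (fun s t hst => hφ j (hst j)) hprod
            (fun s t h => by rw [h j (by simp)])
            (fun s t h => prod_congr rfl fun i hi => by rw [h i hi])
      _ ≤ (𝔼 s ∈ D, φ j (s j)) * ∏ i ∈ J, 𝔼 s ∈ D, φ i (s i) :=
          mul_le_mul_of_nonneg_left ih (expect_nonneg fun s _ => hφ₀ j _)

lemma expect_mul_le_of_card_mul_sum_le {D : Finset ι} {F G : ι → ℝ}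
    (h : #D * ∑ s ∈ D, F s * G s ≤ (∑ s ∈ D, F s) * ∑ s ∈ D, G s) :
    𝔼 s ∈ D, F s * G s ≤ (𝔼 s ∈ D, F s) * 𝔼 s ∈ D, G s := by
  rcases D.eq_empty_or_nonempty with rfl | hne
  · simp
  have hc : (0 : ℝ) < #D := by exact_mod_cast hne.card_pos
  rw [expect_eq_sum_div_card, expect_eq_sum_div_card, expect_eq_sum_div_card, div_mul_div_comm,
    div_le_div_iff₀ hc (by positivity)]
  calc (∑ s ∈ D, F s * G s) * (#D * #D) = (#D * ∑ s ∈ D, F s * G s) * #D := by ring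
    _ ≤ ((∑ s ∈ D, F s) * ∑ s ∈ D, G s) * #D := by gcongr

lemma card_mul_sum_mul_eq_of_forall_eq (D : Finset ι) {F : ι → ℝ} (G : ι → ℝ) {c : ℝ}
    (hF : ∀ s, F s = c) : #D * ∑ s ∈ D, F s * G s = (∑ s ∈ D, F s) * ∑ s ∈ D, G s := by
  simp only [hF, ← mul_sum, sum_const, nsmul_eq_mul]
  ring

theorem negativelyAssociated_piAntidiag_univ [Fintype ι] [DecidableEq ι] (N : ℕ) :
    NegativelyAssociated (piAntidiag (univ : Finset ι) N) := by
  intro A B hAB f g hf hg hfA hgB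
  have hgA : DependsOn g ↑Aᶜ := hgB.mono (by
    rw [coe_subset]; exact subset_compl_iff_disjoint_left.2 hAB)
  refine expect_mul_le_of_card_mul_sum_le ?_
  rcases A.eq_empty_or_nonempty with rfl | hA
  · rw [coe_empty] at hfA
    exact (card_mul_sum_mul_eq_of_forall_eq _ g fun s => hfA.empty s 0).le
  rcases Aᶜ.eq_empty_or_nonempty with hAc | hAc
  · rw [hAc, coe_empty] at hgA
    simp_rw [mul_comm (f _) (g _), mul_comm (∑ s ∈ _, f s)]
    exact (card_mul_sum_mul_eq_of_forall_eq _ f fun s => hgA.empty s 0).le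
  have hone : ∀ X : Finset ι, DependsOn (fun _ : ι → ℕ => (1 : ℝ)) X :=
    fun X => (dependsOn_const 1).mono (Set.empty_subset _)
  have hfg := sum_mul_eq_sum_expect_mul_expect disjoint_compl_right N hfA hgA
  have hf₁ := sum_mul_eq_sum_expect_mul_expect disjoint_compl_right N hfA (hone Aᶜ)
  have hg₁ := sum_mul_eq_sum_expect_mul_expect disjoint_compl_right N (hone A) hgA
  simp only [mul_one, one_mul, expect_const (piAntidiag_nonempty hA _),
    expect_const (piAntidiag_nonempty hAc _)] at hf₁ hg₁
  rw [← union_compl A, hfg, hf₁, hg₁]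
  refine AntivaryOn.card_mul_sum_le_sum_mul_sum fun x hx y hy hxy => ?_
  have hlt : ∑ i ∈ Aᶜ, x i < ∑ i ∈ Aᶜ, y i :=
    lt_of_not_ge fun h => hxy.not_ge (monotone_expect_piAntidiag hAc hg h)
  have hxN := (mem_piAntidiag.1 (mem_coe.1 hx)).1
  have hyN := (mem_piAntidiag.1 (mem_coe.1 hy)).1
  rw [sum_union disjoint_compl_right] at hxN hyN
  exact monotone_expect_piAntidiag hA hf (by omega)

end NegativelyAssociated

theorem stmt17_general (k N : ℕ)
    (D : Finset (Fin k → ℕ)) (hD : ∀ s, s ∈ D ↔ ∑ i, s i = N) :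
    (∀ (A B : Finset (Fin k)), Disjoint A B →
      ∀ f g : (Fin k → ℕ) → ℝ, Monotone f → Monotone g →
        (∀ s t : Fin k → ℕ, (∀ i ∈ A, s i = t i) → f s = f t) →
        (∀ s t : Fin k → ℕ, (∀ i ∈ B, s i = t i) → g s = g t) →
        (∑ s ∈ D, f s * g s) / (D.card : ℝ)
          ≤ ((∑ s ∈ D, f s) / (D.card : ℝ)) * ((∑ s ∈ D, g s) / (D.card : ℝ))) ∧
    ∀ (J : Finset (Fin k)) (lam : ℝ), 0 ≤ lam →
      (∑ s ∈ D, Real.exp (lam * ∑ i ∈ J, (s i : ℝ))) / (D.card : ℝ)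
        ≤ ∏ i ∈ J, (∑ s ∈ D, Real.exp (lam * (s i : ℝ))) / (D.card : ℝ) := by
  obtain rfl : D = piAntidiag univ N := by ext s; simp [hD]
  have hNA := negativelyAssociated_piAntidiag_univ (ι := Fin k) N
  refine ⟨fun A B hAB f g hf hg hfA hgB => ?_, fun J lam hlam => ?_⟩
  · simpa only [expect_eq_sum_div_card] using
      hNA A B hAB f g hf hg (fun s t h => hfA s t h) (fun s t h => hgB s t h)
  · have hexp : Monotone fun x : ℕ => Real.exp (lam * x) := fun x y hxy =>
      Real.exp_le_exp.2 (mul_le_mul_of_nonneg_left (Nat.cast_le.2 hxy) hlam)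
    simpa only [expect_eq_sum_div_card, mul_sum, Real.exp_sum] using
      hNA.expect_prod_le_prod_expect (fun _ => hexp) (fun _ _ => (Real.exp_pos _).le) J

/-- Negative association for a uniformly random composition (Proposition 5 of
Dubhashi–Ranjan): if `(s_1,…,s_k)` is uniform on the vectors of non-negative
integers summing to `N` (here `D` is the set of such vectors), then for
disjoint index sets `A, B` and non-decreasing functions `f, g` depending only
on the coordinates in `A` resp. `B`, `E[f·g] ≤ E[f]·E[g]`; in particular the
Chernoff–Hoeffding exponential-moment bound
`E[exp(λ ∑_{i∈J} s_i)] ≤ ∏_{i∈J} E[exp(λ s_i)]` holds for any `J` and `λ ≥ 0`,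
as it would for independent variables with the same marginals. -/
theorem stmt17 (n k N : ℕ) (hk : 0 < k) (hkn : k < n)
    (D : Finset (Fin k → ℕ)) (hD : ∀ s, s ∈ D ↔ ∑ i, s i = N) :
    (∀ (A B : Finset (Fin k)), Disjoint A B →
      ∀ f g : (Fin k → ℕ) → ℝ, Monotone f → Monotone g →
        (∀ s t : Fin k → ℕ, (∀ i ∈ A, s i = t i) → f s = f t) →
        (∀ s t : Fin k → ℕ, (∀ i ∈ B, s i = t i) → g s = g t) →
        (∑ s ∈ D, f s * g s) / (D.card : ℝ)
          ≤ ((∑ s ∈ D, f s) / (D.card : ℝ)) * ((∑ s ∈ D, g s) / (D.card : ℝ))) ∧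
    ∀ (J : Finset (Fin k)) (lam : ℝ), 0 ≤ lam →
      (∑ s ∈ D, Real.exp (lam * ∑ i ∈ J, (s i : ℝ))) / (D.card : ℝ)
        ≤ ∏ i ∈ J, (∑ s ∈ D, Real.exp (lam * (s i : ℝ))) / (D.card : ℝ) :=
  stmt17_general k N D hD
end
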